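/- arXiv:1312.7548 — 13 statements merged into one kernel-verified Lean document; each statement's English description precedes it below -/
import Mathlib

section
/- For every positive integer n, the number 2(2n+1)(2n+3)·C(2n,n) divides 3·C(6n,3n)·C(3n,n); equivalently, writing S_n = C(6n,3n)·C(3n,n)/(2(2n+1)·C(2n,n)) (which is an integer), we have 3·S_n ≡ 0 (mod 2n+3). -/
/-!
By Kummer's theorem the `p`-adic valuation of a binomial coefficient counts carries. Write
`r = n mod p ^ i`. If `p ^ i ≤ 6 r`, i.e. the fractional part of `n / p ^ i` is at least `1/6`, then
there is a carry at level `i` in `3n + 3n` or in `n + 2n`; a carry in `n + n` implies `p ^ i ≤ 6 r`.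
Hence `v_p(C(6n,3n) C(3n,n)) - v_p(C(2n,n))` is at least the number of levels whose fractional part
lies in `[1/6, 1/2)`. If `p ^ i ∣ 2n + 1` the fractional part is `1/2 - 1/(2 p ^ i)`, and if
`p ^ i ∣ 2n + 3` it is `1/2 - 3/(2 p ^ i)`; both lie in `[1/6, 1/2)` except for `p ^ i = 3`, which is
paid for by the factor `3`. For `p = 2` the level with `2n < 2 ^ i ≤ 4n` pays for the factor `2`.
-/

open Nat Finset

lemma Nat.mod_eq_sub_of_le_of_lt_two_mul {a q : ℕ} (h₁ : q ≤ a) (h₂ : a < 2 * q) :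
    a % q = a - q := by
  rw [Nat.mod_eq_sub_mod h₁, Nat.mod_eq_of_lt (by omega)]

lemma carry_or_carry_of_le_six_mul_mod {n q : ℕ} (h : q ≤ 6 * (n % q)) :
    q ≤ 3 * n % q + 3 * n % q ∨ q ≤ n % q + 2 * n % q := by
  obtain rfl | hq := q.eq_zero_or_pos
  · simp
  rw [← Nat.mul_mod_mod 3, ← Nat.mul_mod_mod 2]
  set r := n % q
  have hr : r < q := Nat.mod_lt _ hq
  rcases lt_or_ge (3 * r) q with h3 | h3
  · left; rw [Nat.mod_eq_of_lt h3]; omega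
  rcases lt_or_ge (2 * r) q with h2 | h2
  · right; rw [Nat.mod_eq_of_lt h2]; omega
  rcases lt_or_ge (3 * r) (2 * q) with h3' | h3'
  · left; rw [Nat.mod_eq_sub_of_le_of_lt_two_mul h3 h3']; omega
  · right; rw [Nat.mod_eq_sub_of_le_of_lt_two_mul h2 (by omega)]; omega

/-- The levels `i ≥ 1` at which the fractional part of `n / p ^ i` lies in `[1/6, 1/2)`. -/
def extraLevels (p n : ℕ) : Finset ℕ :=
  {i ∈ Ico 1 (log p (6 * n) + 1) | 2 * (n % p ^ i) < p ^ i ∧ p ^ i ≤ 6 * (n % p ^ i)}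

lemma padicValNat_choose_add_card_extraLevels_le (p n : ℕ) [Fact p.Prime] :
    padicValNat p (choose (2 * n) n) + #(extraLevels p n) ≤
      padicValNat p (choose (6 * n) (3 * n)) + padicValNat p (choose (3 * n) n) := by
  have hlog : ∀ k ≤ 6, log p (k * n) < log p (6 * n) + 1 := fun k hk =>
    Nat.lt_succ_of_le (Nat.log_mono_right (Nat.mul_le_mul_right n hk))
  rw [padicValNat_choose (by omega) (hlog 2 (by norm_num)),
    padicValNat_choose (by omega) (hlog 6 le_rfl),
    padicValNat_choose (by omega) (hlog 3 (by norm_num)),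
    show 2 * n - n = n by omega, show 6 * n - 3 * n = 3 * n by omega,
    show 3 * n - n = 2 * n by omega, extraLevels]
  rw [← card_union_of_disjoint (disjoint_filter.2 fun i _ h h' => by omega), ← filter_or]
  refine (card_le_card (monotone_filter_right _ fun i _ h =>
    carry_or_carry_of_le_six_mul_mod (n := n) (q := p ^ i) (by omega))).trans ?_
  rw [filter_or]
  exact card_union_le _ _

lemma two_mul_mod_add_eq_of_dvd {n q c : ℕ} (hc : Odd c) (hcq : c < q) (h : q ∣ 2 * n + c) :
    2 * (n % q) + c = q := by
  have hr : n % q < q := Nat.mod_lt _ (by omega)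
  obtain ⟨k, hk⟩ : q ∣ 2 * (n % q) + c := by
    have := Nat.div_add_mod n q
    rw [← this, mul_add, add_assoc, ← mul_assoc, mul_comm 2 q, mul_assoc] at h
    exact (Nat.dvd_add_right (dvd_mul_right q _)).1 h
  -- `2 (n % q) + c` is an odd multiple of `q` below `3 q`
  have hk3 : k < 3 := Nat.lt_of_mul_lt_mul_left (a := q) (by omega)
  interval_cases k
  · obtain ⟨c, rfl⟩ := hc; omega
  · omega
  · obtain ⟨c, rfl⟩ := hc; omega

lemma mem_extraLevels_of_dvd {p n c i : ℕ} (hp : 1 < p) (hi : 1 ≤ i) (hc : Odd c)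
    (hci : 3 * c ≤ 2 * p ^ i) (h : p ^ i ∣ 2 * n + c) : i ∈ extraLevels p n := by
  have hc₀ := hc.pos
  have hres := two_mul_mod_add_eq_of_dvd hc (by omega) h
  have hle : p ^ i ≤ 6 * (n % p ^ i) := by omega
  have hlog : i ≤ log p (6 * n) := Nat.le_log_of_pow_le hp (hle.trans (by
    have := Nat.mod_le n (p ^ i); omega))
  simp only [extraLevels, mem_filter, mem_Ico]
  omega

lemma padicValNat_two_mul_add_le {p n c s : ℕ} [hp : Fact p.Prime] (hc : Odd c)
    (hcs : 3 * c ≤ 2 * p ^ s) :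
    padicValNat p (2 * n + c) ≤ #(extraLevels p n) + (s - 1) := by
  set a := padicValNat p (2 * n + c)
  have hc₀ := hc.pos
  have hs : s ≠ 0 := by rintro rfl; rw [pow_zero] at hcs; omega
  have hsub : Ico s (a + 1) ⊆ extraLevels p n := fun i hi => by
    rw [mem_Ico] at hi
    refine mem_extraLevels_of_dvd hp.out.one_lt (by omega) hc
      (hcs.trans (by gcongr; exacts [hp.out.one_le, hi.1])) ?_
    exact (padicValNat_dvd_iff_le (by omega)).2 (by omega)
  have := card_le_card hsub
  rw [Nat.card_Ico] at this
  omega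

lemma one_le_card_extraLevels_two {n : ℕ} (hn : 0 < n) : 1 ≤ #(extraLevels 2 n) := by
  have hlo := Nat.pow_log_le_self 2 hn.ne'
  have hhi := Nat.lt_pow_succ_log_self one_lt_two n
  have hq : 2 ^ (log 2 n + 2) = 4 * 2 ^ log 2 n := by ring
  rw [pow_succ] at hhi
  have hmod : n % 2 ^ (log 2 n + 2) = n := Nat.mod_eq_of_lt (by omega)
  have hlog : log 2 n + 2 ≤ log 2 (6 * n) := Nat.le_log_of_pow_le one_lt_two (by omega)
  refine card_pos.2 ⟨log 2 n + 2, ?_⟩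
  simp only [extraLevels, mem_filter, mem_Ico, hmod]
  omega

lemma padicValNat_two_add_two_mul_add_one_add_two_mul_add_three_le {p n : ℕ} [hp : Fact p.Prime]
    (hn : 0 < n) :
    padicValNat p 2 + padicValNat p (2 * n + 1) + padicValNat p (2 * n + 3) ≤
      padicValNat p 3 + #(extraLevels p n) := by
  have hodd : ∀ k, ¬ 2 ∣ 2 * n + 2 * k + 1 := by omega
  obtain rfl | hp2 := eq_or_ne p 2
  · rw [padicValNat.self one_lt_two, padicValNat.eq_zero_of_not_dvd (hodd 0),
      padicValNat.eq_zero_of_not_dvd (hodd 1)]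
    have := one_le_card_extraLevels_two hn
    omega
  have hp3 : 3 ≤ p := hp.out.two_le.lt_of_ne hp2.symm
  rw [padicValNat.eq_zero_of_not_dvd fun h => by have := Nat.le_of_dvd two_pos h; omega]
  by_cases h1 : p ∣ 2 * n + 1
  · have h3 : ¬ p ∣ 2 * n + 3 := fun h3 => by
      have := Nat.le_of_dvd two_pos ((Nat.dvd_add_right h1).1 h3)
      omega
    rw [padicValNat.eq_zero_of_not_dvd h3]
    have := padicValNat_two_mul_add_le (p := p) (n := n) (c := 1) (s := 1) odd_one
      (by rw [pow_one]; omega)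
    omega
  rw [padicValNat.eq_zero_of_not_dvd h1]
  obtain rfl | hp3' := eq_or_ne p 3
  · have := padicValNat_two_mul_add_le (p := 3) (n := n) (c := 3) (s := 2) (by decide)
      (by norm_num)
    rw [padicValNat.self (by norm_num)]
    omega
  · have hp4 : p ≠ 4 := by rintro rfl; exact absurd hp.out (by decide)
    have := padicValNat_two_mul_add_le (p := p) (n := n) (c := 3) (s := 1) (by decide)
      (by rw [pow_one]; omega)
    omega

theorem sun_conjecture_3i (n : ℕ) (hn : 0 < n) :
    2 * (2 * n + 1) * (2 * n + 3) * Nat.choose (2 * n) n ∣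
      3 * (Nat.choose (6 * n) (3 * n) * Nat.choose (3 * n) n) := by
  have h2 := (choose_pos (by omega : n ≤ 2 * n)).ne'
  have h6 := (choose_pos (by omega : 3 * n ≤ 6 * n)).ne'
  have h3 := (choose_pos (by omega : n ≤ 3 * n)).ne'
  refine (factorization_prime_le_iff_dvd (by positivity) (by positivity)).1 fun p hp => ?_
  have := Fact.mk hp
  simp only [factorization_def _ hp]
  rw [padicValNat.mul (by positivity) h2, padicValNat.mul (by positivity) (by omega),
    padicValNat.mul two_ne_zero (by omega), padicValNat.mul three_ne_zero (by positivity),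
    padicValNat.mul h6 h3]
  have := padicValNat_choose_add_card_extraLevels_le p n
  have := padicValNat_two_add_two_mul_add_one_add_two_mul_add_three_le (p := p) hn
  omega
end

section
/- For every positive integer n, the number (10n+1)(10n+3)·C(3n,n) divides 21·C(15n,5n)·C(5n−1,n−1); equivalently, writing t_n = C(15n,5n)·C(5n−1,n−1)/((10n+1)·C(3n,n)) (which is an integer), we have 21·t_n ≡ 0 (mod 10n+3). -/
/-!
Compare `p`-adic valuations through Legendre's formula `v_p(m!) = ∑_{i ≥ 1} ⌊m / p^i⌋`. After
clearing the binomial coefficients the claim reads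
`5 (10n+1) (10n+3) (10n)! (4n)! (3n)! ∣ 21 (15n)! (2n)!`, so for every prime power `q = p^i` one
needs `⌊15n/q⌋ + ⌊2n/q⌋ - ⌊10n/q⌋ - ⌊4n/q⌋ - ⌊3n/q⌋ ≥ 0`, with a surplus of `1` whenever `q`
divides `10n+1`, or divides `10n+3` and `q ≥ 9`; the remaining prime powers `3` and `7` dividing
`10n+3` are paid for by the factor `21`. The factor `5` comes from
`v_5((15n)!) - v_5((10n)!) = 3n - 2n + v_5((3n)!) - v_5((2n)!)` and `v_5((4n)!) < n`.
-/

open Finset Nat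

section FloorQuotients

variable (n q : ℕ)

lemma mod_eq_or_mod_add_eq_of_add_eq {x y z : ℕ} (h : x + y = z) :
    z % q = x % q + y % q ∨ z % q + q = x % q + y % q := by
  subst h
  have := Nat.add_mod_add_ite x y q
  split_ifs at this <;> omega

lemma mod_add_eq_of_dvd_add {a r : ℕ} (hr : 0 < r) (hrq : r < q) (h : q ∣ a + r) :
    a % q + r = q := by
  have := Nat.mod_lt a (show 0 < q by omega)
  refine Nat.eq_of_dvd_of_lt_two_mul (by omega) ?_ (by omega)
  rwa [Nat.dvd_iff_mod_eq_zero, Nat.add_mod, Nat.mod_eq_of_lt hrq, ← Nat.dvd_iff_mod_eq_zero] at h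

lemma mul_mod_sums_add_le (hq : 0 < q) {δ : ℕ} (hδ : δ = 0 ∨ δ = 1 ∧ q % 2 = 1 ∧
      (10 * n % q + 1 = q ∧ 2 ≤ q ∨ 10 * n % q + 3 = q ∧ 9 ≤ q)) :
    δ * q + (15 * n % q + 2 * n % q) ≤ 10 * n % q + 4 * n % q + 3 * n % q := by
  -- `omega` runs through all carry patterns of the residues `k * n % q`; oddness of `q` rules out
  -- the spurious pattern with `10 * n % q = q - 1` for even `q`.
  have := mod_eq_or_mod_add_eq_of_add_eq q (show n + n = 2 * n by ring)
  have := mod_eq_or_mod_add_eq_of_add_eq q (show 2 * n + n = 3 * n by ring)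
  have := mod_eq_or_mod_add_eq_of_add_eq q (show 3 * n + n = 4 * n by ring)
  have := mod_eq_or_mod_add_eq_of_add_eq q (show 4 * n + n = 5 * n by ring)
  have := mod_eq_or_mod_add_eq_of_add_eq q (show 5 * n + 5 * n = 10 * n by ring)
  have := mod_eq_or_mod_add_eq_of_add_eq q (show 10 * n + 5 * n = 15 * n by ring)
  have := Nat.mod_lt n hq
  have := Nat.mod_lt (2 * n) hq
  have := Nat.mod_lt (3 * n) hq
  have := Nat.mod_lt (4 * n) hq
  have := Nat.mod_lt (5 * n) hq
  have := Nat.mod_lt (10 * n) hq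
  have := Nat.mod_lt (15 * n) hq
  generalize n % q = r1 at *
  generalize 2 * n % q = r2 at *
  generalize 3 * n % q = r3 at *
  generalize 4 * n % q = r4 at *
  generalize 5 * n % q = r5 at *
  generalize 10 * n % q = r10 at *
  generalize 15 * n % q = r15 at *
  rcases hδ with rfl | ⟨rfl, _⟩ <;> omega

lemma add_le_div_sums_of_mod_sums {δ : ℕ} (hq : 0 < q)
    (h : δ * q + (15 * n % q + 2 * n % q) ≤ 10 * n % q + 4 * n % q + 3 * n % q) :
    δ + (10 * n / q + 4 * n / q + 3 * n / q) ≤ 15 * n / q + 2 * n / q := by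
  refine Nat.le_of_mul_le_mul_left ?_ hq
  have := Nat.div_add_mod (15 * n) q
  have := Nat.div_add_mod (10 * n) q
  have := Nat.div_add_mod (4 * n) q
  have := Nat.div_add_mod (3 * n) q
  have := Nat.div_add_mod (2 * n) q
  linarith

lemma div_sums_le : 10 * n / q + 4 * n / q + 3 * n / q ≤ 15 * n / q + 2 * n / q := by
  rcases q.eq_zero_or_pos with rfl | hq
  · simp
  simpa using add_le_div_sums_of_mod_sums n q (δ := 0) hq (mul_mod_sums_add_le n q hq (.inl rfl))

lemma div_sums_lt (h : 2 ≤ q ∧ q ∣ 10 * n + 1 ∨ 9 ≤ q ∧ q ∣ 10 * n + 3) :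
    10 * n / q + 4 * n / q + 3 * n / q < 15 * n / q + 2 * n / q := by
  have hq : 0 < q := by omega
  refine Nat.one_add_le_iff.1 <|
    add_le_div_sums_of_mod_sums n q hq (mul_mod_sums_add_le n q hq (.inr ⟨rfl, ?_⟩))
  rcases h with ⟨hq2, hd⟩ | ⟨hq9, hd⟩
  · have hodd : Odd q := Odd.of_dvd_nat ⟨5 * n, by ring⟩ hd
    exact ⟨Nat.odd_iff.1 hodd, .inl ⟨mod_add_eq_of_dvd_add q one_pos (by omega) hd, hq2⟩⟩
  · have hodd : Odd q := Odd.of_dvd_nat ⟨5 * n + 1, by ring⟩ hd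
    exact ⟨Nat.odd_iff.1 hodd, .inr ⟨mod_add_eq_of_dvd_add q three_pos (by omega) hd, hq9⟩⟩

lemma dvd_indicators_add_div_sums_le (hq : 2 ≤ q) :
    (if q ∣ 10 * n + 1 then 1 else 0) + (if q ∣ 10 * n + 3 then 1 else 0) +
        (10 * n / q + 4 * n / q + 3 * n / q) ≤
      (if q ∣ 21 then 1 else 0) + (15 * n / q + 2 * n / q) := by
  have hle := div_sums_le n q
  by_cases h1 : q ∣ 10 * n + 1
  · have h3 : ¬ q ∣ 10 * n + 3 := fun h3 => by
      have h2 := Nat.dvd_sub h3 h1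
      rw [show 10 * n + 3 - (10 * n + 1) = 2 by omega] at h2
      obtain rfl : q = 2 := le_antisymm (Nat.le_of_dvd two_pos h2) hq
      omega
    have := div_sums_lt n q (.inl ⟨hq, h1⟩)
    simp only [h1, h3, if_true, if_false]
    split_ifs <;> omega
  · by_cases h3 : q ∣ 10 * n + 3
    · by_cases hq9 : 9 ≤ q
      · have := div_sums_lt n q (.inr ⟨hq9, h3⟩)
        simp only [h1, h3, if_true, if_false]
        split_ifs <;> omega
      · have h21 : q ∣ 21 := by interval_cases q <;> omega
        simp only [h1, h3, h21, if_true, if_false]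
        omega
    · simp only [h1, h3, if_false]
      split_ifs <;> omega

end FloorQuotients

lemma padicValNat_eq_card_pow_dvd {p m b : ℕ} [hp : Fact p.Prime] (hm : m ≠ 0)
    (hb : Nat.log p m < b) : padicValNat p m = #{i ∈ Ico 1 b | p ^ i ∣ m} := by
  exact_mod_cast (padicValNat_eq_emultiplicity hm).trans
    (Nat.emultiplicity_eq_card_pow_dvd hp.out.ne_one (Nat.pos_of_ne_zero hm) hb)

section Valuations

variable (n : ℕ)

lemma padicValNat_factorials_add_le (p : ℕ) [hp : Fact p.Prime] :
    padicValNat p (10 * n + 1) + padicValNat p (10 * n + 3) +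
        (padicValNat p (10 * n)! + padicValNat p (4 * n)! + padicValNat p (3 * n)!) ≤
      padicValNat p 21 + (padicValNat p (15 * n)! + padicValNat p (2 * n)!) := by
  set b := 15 * n + 22
  have hb : ∀ m < b, Nat.log p m < b := fun m hm => (Nat.log_le_self p m).trans_lt hm
  rw [padicValNat_eq_card_pow_dvd (m := 10 * n + 1) (by omega) (hb _ (by omega)),
    padicValNat_eq_card_pow_dvd (m := 10 * n + 3) (by omega) (hb _ (by omega)),
    padicValNat_eq_card_pow_dvd (m := 21) (by omega) (hb _ (by omega)),
    padicValNat_factorial (hb _ (by omega)), padicValNat_factorial (hb _ (by omega)),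
    padicValNat_factorial (hb _ (by omega)), padicValNat_factorial (hb _ (by omega)),
    padicValNat_factorial (hb _ (by omega))]
  simp only [card_filter, ← sum_add_distrib]
  refine sum_le_sum fun i hi => dvd_indicators_add_div_sums_le n (p ^ i) ?_
  exact Nat.one_lt_pow (by rw [mem_Ico] at hi; omega) hp.out.one_lt

lemma padicValNat_five_factorials_lt (hn : 0 < n) :
    padicValNat 5 (10 * n)! + padicValNat 5 (4 * n)! + padicValNat 5 (3 * n)! <
      padicValNat 5 (15 * n)! + padicValNat 5 (2 * n)! := by
  have : Fact (Nat.Prime 5) := ⟨by norm_num⟩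
  have h4 := sub_one_mul_padicValNat_factorial_lt_of_ne_zero 5 (show 4 * n ≠ 0 by omega)
  rw [show 15 * n = 5 * (3 * n) by ring, show 10 * n = 5 * (2 * n) by ring,
    padicValNat_factorial_mul, padicValNat_factorial_mul]
  omega

theorem five_mul_factorials_dvd (hn : 0 < n) :
    5 * (10 * n + 1) * (10 * n + 3) * (10 * n)! * (4 * n)! * (3 * n)! ∣
      21 * (15 * n)! * (2 * n)! := by
  rw [← Nat.factorization_prime_le_iff_dvd (by positivity) (by positivity)]
  intro p hp
  have : Fact p.Prime := ⟨hp⟩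
  rw [Nat.factorization_def _ hp, Nat.factorization_def _ hp]
  repeat rw [padicValNat.mul (by positivity) (by positivity)]
  have hle := padicValNat_factorials_add_le n p
  by_cases hp5 : p = 5
  · subst hp5
    have := padicValNat_five_factorials_lt n hn
    rw [padicValNat.self (by norm_num),
      padicValNat.eq_zero_of_not_dvd (show ¬ 5 ∣ 21 by norm_num),
      padicValNat.eq_zero_of_not_dvd (show ¬ 5 ∣ 10 * n + 1 by omega),
      padicValNat.eq_zero_of_not_dvd (show ¬ 5 ∣ 10 * n + 3 by omega)]
    omega
  · rw [padicValNat.eq_zero_of_not_dvd fun h =>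
      hp5 ((Nat.prime_dvd_prime_iff_eq hp (by norm_num)).1 h)]
    omega

lemma five_mul_choose_sub_one (hn : 0 < n) :
    5 * choose (5 * n - 1) (n - 1) = choose (5 * n) n := by
  obtain ⟨m, rfl⟩ : ∃ m, n = m + 1 := ⟨n - 1, by omega⟩
  have h := add_one_mul_choose_eq (5 * m + 4) m
  rw [show 5 * m + 4 + 1 = 5 * (m + 1) by ring] at h
  rw [show 5 * (m + 1) - 1 = 5 * m + 4 by omega, add_tsub_cancel_right]
  exact Nat.eq_of_mul_eq_mul_right m.succ_pos (by linarith)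

end Valuations

theorem sun_conjecture_1_3 (n : ℕ) (hn : 0 < n) :
    (10 * n + 1) * (10 * n + 3) * Nat.choose (3 * n) n ∣
      21 * (Nat.choose (15 * n) (5 * n) * Nat.choose (5 * n - 1) (n - 1)) := by
  have h3 := choose_mul_factorial_mul_factorial (show n ≤ 3 * n by omega)
  have h15 := choose_mul_factorial_mul_factorial (show 5 * n ≤ 15 * n by omega)
  have h5 := choose_mul_factorial_mul_factorial (show n ≤ 5 * n by omega)
  rw [show 3 * n - n = 2 * n by omega] at h3
  rw [show 15 * n - 5 * n = 10 * n by omega] at h15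
  rw [show 5 * n - n = 4 * n by omega, ← five_mul_choose_sub_one n hn] at h5
  have hc : 0 < 5 * n ! * (2 * n)! * (4 * n)! * (10 * n)! := by positivity
  refine (Nat.mul_dvd_mul_iff_right hc).1 ?_
  calc (10 * n + 1) * (10 * n + 3) * choose (3 * n) n *
        (5 * n ! * (2 * n)! * (4 * n)! * (10 * n)!)
      = 5 * (10 * n + 1) * (10 * n + 3) * (10 * n)! * (4 * n)! * (3 * n)! := by rw [← h3]; ring
    _ ∣ 21 * (15 * n)! * (2 * n)! := five_mul_factorials_dvd n hn
    _ = 21 * (choose (15 * n) (5 * n) * choose (5 * n - 1) (n - 1)) *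
          (5 * n ! * (2 * n)! * (4 * n)! * (10 * n)!) := by rw [← h15, ← h5]; ring
end

section
/- For every positive integer n, the number 2(2n+1)(2n+5)·C(2n,n) divides 105·C(6n,3n)·C(3n,n); equivalently, 105·S_n ≡ 0 (mod 2n+5), where S_n = C(6n,3n)·C(3n,n)/(2(2n+1)·C(2n,n)). -/
/-!
By Legendre's formula, the exponent of a prime `p` in
`C(6n, 3n) C(3n, n) / C(2n, n) = (6n)! n! / ((3n)! (2n)!²)` is `∑_{i ≥ 1} f(n / p^i)`, where
`f(x) = ⌊6x⌋ + ⌊x⌋ - ⌊3x⌋ - 2⌊2x⌋` is `1` if `⌊6x⌋ mod 6 ∈ {1, 2, 5}` and `0` otherwise.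
For `p = 2`, the level `2^i ≤ 6n < 2^(i+1)` contributes `1`. If `q = p^i` divides `2n + 1` with
`q ≥ 3`, or `2n + 5` with `q ≥ 9`, then `⌊6n/q⌋ ≡ 1` or `2 (mod 6)`, so each such level contributes
`1`; the remaining cases `q ∈ {3, 5, 7}` dividing `2n + 5` are paid for by `105`. As `2n + 1` and
`2n + 5` have no common odd prime factor, this covers the whole of `2 (2n + 1) (2n + 5)`.
-/

open Finset Nat

-- The value of `⌊6x⌋ + ⌊x⌋ - ⌊3x⌋ - 2⌊2x⌋` at `x = n / q` (see `div_add_landau`), which depends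
-- only on `⌊6x⌋ mod 6`.
def landau (n q : ℕ) : ℕ := if 6 * n / q % 6 ∈ ({1, 2, 5} : Finset ℕ) then 1 else 0

lemma mul_div_div_cancel_left {k : ℕ} (hk : 0 < k) (m q : ℕ) : k * m / q / k = m / q := by
  rw [Nat.div_div_eq_div_mul, Nat.mul_comm q k, Nat.mul_div_mul_left _ _ hk]

lemma div_add_landau (n q : ℕ) :
    3 * n / q + 2 * (2 * n / q) + landau n q = 6 * n / q + n / q := by
  have h3 : 3 * n / q = 6 * n / q / 2 := by
    rw [show 6 * n = 2 * (3 * n) by ring, mul_div_div_cancel_left two_pos]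
  have h2 : 2 * n / q = 6 * n / q / 3 := by
    rw [show 6 * n = 3 * (2 * n) by ring, mul_div_div_cancel_left three_pos]
  have h1 : n / q = 6 * n / q / 6 := (mul_div_div_cancel_left (by norm_num) n q).symm
  rw [h3, h2, h1, landau]
  generalize 6 * n / q = j
  split_ifs with h <;> simp only [mem_insert, mem_singleton] at h <;> omega

lemma landau_two_pow_log {n : ℕ} (hn : n ≠ 0) : landau n (2 ^ log 2 (6 * n)) = 1 := by
  have hj : 6 * n / 2 ^ log 2 (6 * n) = 1 := by
    refine Nat.div_eq_of_lt_le ?_ ?_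
    · simpa using Nat.pow_log_le_self 2 (by omega : 6 * n ≠ 0)
    · simpa [pow_succ, two_mul, ← mul_two] using Nat.lt_pow_succ_log_self one_lt_two (6 * n)
  simp [landau, hj]

-- Writing `2n + c = qm` with `m` odd, `⌊6n/q⌋` is `3m - 1` or `3m - 2`.
lemma landau_eq_one_of_dvd {n q c : ℕ} (hc : Odd c) (hdvd : q ∣ 2 * n + c)
    (hq : 3 * c ≤ 2 * q) : landau n q = 1 := by
  obtain ⟨m, hm⟩ := hdvd
  have hm_odd : Odd m := (Nat.odd_mul.mp (hm ▸ (even_two_mul n).add_odd hc)).2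
  have hq0 : 0 < q := by obtain ⟨k, rfl⟩ := hc; omega
  have hlow : 3 * m - 2 ≤ 6 * n / q := by
    rw [Nat.le_div_iff_mul_le hq0, Nat.sub_mul, Nat.mul_assoc, Nat.mul_comm m, ← hm]
    omega
  have hupp : 6 * n / q < 3 * m := by
    rw [Nat.div_lt_iff_lt_mul hq0, Nat.mul_assoc, Nat.mul_comm m, ← hm]
    obtain ⟨k, rfl⟩ := hc; omega
  obtain ⟨k, rfl⟩ := hm_odd
  have : 6 * n / q % 6 = 1 ∨ 6 * n / q % 6 = 2 := by omega
  rcases this with h | h <;> simp [landau, h]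

lemma card_Icc_le_sum_landau {n p a c b : ℕ} (ha : 1 ≤ a) (hcb : c < b)
    (h : ∀ i ∈ Icc a c, landau n (p ^ i) = 1) :
    c + 1 - a ≤ ∑ i ∈ Ico 1 b, landau n (p ^ i) :=
  calc c + 1 - a = #(Icc a c) • 1 := by simp
    _ ≤ ∑ i ∈ Icc a c, landau n (p ^ i) := card_nsmul_le_sum _ _ _ fun i hi => (h i hi).ge
    _ ≤ ∑ i ∈ Ico 1 b, landau n (p ^ i) := sum_le_sum_of_subset fun i hi => by
        simp only [mem_Icc, mem_Ico] at hi ⊢; omega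

lemma one_le_sum_landau_two {n b : ℕ} (hn : n ≠ 0) (hb : log 2 (6 * n) < b) :
    1 ≤ ∑ i ∈ Ico 1 b, landau n (2 ^ i) := by
  have hlog : 1 ≤ log 2 (6 * n) := Nat.log_pos one_lt_two (by omega)
  simpa using card_Icc_le_sum_landau hlog hb fun i hi => by
    rw [Icc_self, mem_singleton] at hi
    exact hi ▸ landau_two_pow_log hn

lemma factorization_two_mul_add_one_le_sum_landau {n p b : ℕ} (hp : p.Prime)
    (hb : (2 * n + 1).factorization p < b) :
    (2 * n + 1).factorization p ≤ ∑ i ∈ Ico 1 b, landau n (p ^ i) := by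
  simpa using card_Icc_le_sum_landau le_rfl hb fun i hi => by
    rw [mem_Icc] at hi
    refine landau_eq_one_of_dvd odd_one
      ((hp.pow_dvd_iff_le_factorization (by omega)).2 hi.2) ?_
    have := Nat.one_lt_pow (by omega) hp.one_lt (n := i)
    omega

lemma factorization_two_mul_add_five_le_sum_landau {n p b : ℕ} (hp : p.Prime)
    (hb : (2 * n + 5).factorization p < b) :
    (2 * n + 5).factorization p ≤ (105).factorization p + ∑ i ∈ Ico 1 b, landau n (p ^ i) := by
  set v := (2 * n + 5).factorization p
  have hdvd : ∀ i ≤ v, p ^ i ∣ 2 * n + 5 := fun i hi =>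
    (hp.pow_dvd_iff_le_factorization (by omega)).2 hi
  have hgain : ∀ i ∈ Icc 1 v, 8 ≤ p ^ i → landau n (p ^ i) = 1 := fun i hi h8 =>
    landau_eq_one_of_dvd (by decide) (hdvd i (mem_Icc.1 hi).2) (by omega)
  rcases Nat.eq_zero_or_pos v with hv | hv
  · omega
  have hp3 : 3 ≤ p := by
    have h1 : p ∣ 2 * n + 5 := by simpa using hdvd 1 hv
    have h2 : p ≠ 2 := by rintro rfl; omega
    have := hp.two_le
    omega
  by_cases hp8 : 8 ≤ p
  · refine le_add_left ?_
    simpa using card_Icc_le_sum_landau le_rfl hb fun i hi =>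
      hgain i hi (hp8.trans (Nat.le_self_pow (by simp at hi; omega) p))
  · have h105 : 1 ≤ (105).factorization p := by
      refine (hp.pow_dvd_iff_le_factorization (by norm_num)).1 ?_
      interval_cases p <;> norm_num at hp <;> norm_num
    have := card_Icc_le_sum_landau (a := 2) (by norm_num) hb fun i hi => by
      simp only [mem_Icc] at hi
      refine hgain i (mem_Icc.2 ⟨by omega, hi.2⟩) ?_
      calc 8 ≤ 3 ^ 2 := by norm_num
        _ ≤ p ^ i := (Nat.pow_le_pow_left hp3 2).trans (Nat.pow_le_pow_right hp.pos hi.1)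
    omega

lemma factorization_le_sum_landau {n p b : ℕ} (hp : p.Prime) (hn : n ≠ 0) (hb : 6 * n < b) :
    (2 * (2 * n + 1) * (2 * n + 5)).factorization p ≤
      (105).factorization p + ∑ i ∈ Ico 1 b, landau n (p ^ i) := by
  rw [Nat.factorization_mul (by positivity) (by positivity),
    Nat.factorization_mul (by positivity) (by positivity)]
  simp only [Finsupp.coe_add, Pi.add_apply]
  have h1 := factorization_two_mul_add_one_le_sum_landau hp (n := n) (b := b)
    ((factorization_lt p (by omega)).trans_le (by omega))
  have h5 := factorization_two_mul_add_five_le_sum_landau hp (n := n) (b := b)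
    ((factorization_lt p (by omega)).trans_le (by omega))
  by_cases hp2 : p = 2
  · subst hp2
    have := one_le_sum_landau_two hn ((log_le_self 2 (6 * n)).trans_lt hb)
    rw [prime_two.factorization_self, factorization_eq_zero_of_not_dvd (by omega),
      factorization_eq_zero_of_not_dvd (by omega)]
    omega
  have hp_ndvd_two : ¬p ∣ 2 := fun h => hp2 ((prime_dvd_prime_iff_eq hp prime_two).1 h)
  have hcop : (2 * n + 1).factorization p = 0 ∨ (2 * n + 5).factorization p = 0 := by
    by_contra! h
    have h4 : p ∣ 2 ^ 2 := by
      simpa using Nat.dvd_sub (dvd_of_factorization_pos h.2) (dvd_of_factorization_pos h.1)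
    exact hp_ndvd_two (hp.dvd_of_dvd_pow h4)
  rw [factorization_eq_zero_of_not_dvd hp_ndvd_two]
  omega

lemma factorization_factorial_mul_eq {n p b : ℕ} (hp : p.Prime) (hb : log p (6 * n) < b) :
    ((6 * n)! * n !).factorization p =
      ((3 * n)! * (2 * n)! * (2 * n)!).factorization p + ∑ i ∈ Ico 1 b, landau n (p ^ i) := by
  have hL : ∀ m ≤ 6 * n, (m !).factorization p = ∑ i ∈ Ico 1 b, m / p ^ i :=
    fun m hm => factorization_factorial hp ((log_mono_right hm).trans_lt hb)
  rw [Nat.factorization_mul (by positivity) (by positivity),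
    Nat.factorization_mul (by positivity) (by positivity),
    Nat.factorization_mul (by positivity) (by positivity)]
  simp only [Finsupp.coe_add, Pi.add_apply]
  rw [hL _ le_rfl, hL n (by omega), hL (3 * n) (by omega), hL (2 * n) (by omega)]
  simp only [← sum_add_distrib]
  exact sum_congr rfl fun i _ => by rw [← div_add_landau]; ring

lemma mul_factorial_dvd_mul_factorial {n : ℕ} (hn : n ≠ 0) :
    2 * (2 * n + 1) * (2 * n + 5) * ((3 * n)! * (2 * n)! * (2 * n)!) ∣
      105 * ((6 * n)! * n !) := by
  refine (factorization_prime_le_iff_dvd (by positivity) (by positivity)).1 fun p hp => ?_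
  rw [Nat.factorization_mul (by positivity : 2 * (2 * n + 1) * (2 * n + 5) ≠ 0) (by positivity),
    Nat.factorization_mul (by norm_num : 105 ≠ 0) (by positivity)]
  simp only [Finsupp.coe_add, Pi.add_apply]
  rw [factorization_factorial_mul_eq hp ((log_le_self p _).trans_lt (lt_add_one _))]
  have := factorization_le_sum_landau hp hn (lt_add_one (6 * n))
  omega

theorem S_n_mod_2n_add_5 (n : ℕ) (hn : 0 < n) :
    2 * (2 * n + 1) * (2 * n + 5) * Nat.choose (2 * n) n ∣
      105 * (Nat.choose (6 * n) (3 * n) * Nat.choose (3 * n) n) := by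
  have central : (2 * n).choose n * n ! * n ! = (2 * n)! := by
    rw [two_mul]; exact add_choose_mul_factorial_mul_factorial n n
  have h6 : (6 * n).choose (3 * n) * (3 * n)! * (3 * n)! = (6 * n)! := by
    rw [show 6 * n = 3 * n + 3 * n by ring]; exact add_choose_mul_factorial_mul_factorial _ _
  have h3 : (3 * n).choose n * (2 * n)! * n ! = (3 * n)! := by
    rw [show 3 * n = 2 * n + n by ring]; exact add_choose_mul_factorial_mul_factorial _ _
  rw [← Nat.mul_dvd_mul_iff_right (by positivity : 0 < (3 * n)! * (2 * n)! * n ! * n !)]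
  convert mul_factorial_dvd_mul_factorial hn.ne' using 1
  · rw [← central]; ring
  · rw [← h6, ← h3]; ring
end

section
/- For every positive integer n, the number 2(2n+1)(2n+7)·C(2n,n) divides 315·C(6n,3n)·C(3n,n); equivalently, 315·S_n ≡ 0 (mod 2n+7), where S_n = C(6n,3n)·C(3n,n)/(2(2n+1)·C(2n,n)). -/
/-!
Clearing denominators, the claim is that `2 (2n+1) (2n+7) (2n)!² (3n)!` divides `315 (6n)! n!`.
Compare `p`-adic valuations with Legendre's formula, level by level in `q = p ^ i`. If `t` is the
fractional part of `n / q`, the level contributes `⌊6t⌋ - ⌊3t⌋ - 2⌊2t⌋ ≥ 0` to the right-hand side,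
and this is `1` when `t ∈ [1/6, 1/2)`. A level `q ≥ 2` dividing `2n+1` has `t = (q-1)/(2q)` in that
window, and one dividing `2n+7` has `t = (q-7)/(2q)` in it unless `q ∈ {3, 5, 7, 9}`, which are paid
for by `315 = 3·5·7·9`; `q = 3` is the only level dividing both. The factor `2` is paid for by the
level `q = 2 ^ i ∈ (2n, 4n]`, where `t = n / q ∈ [1/4, 1/2)`.
-/

open Finset
open scoped Nat

/-- The fractional part of `m / q` lies in `[1/6, 1/2)`. -/
abbrev FractInWindow (q m : ℕ) : Prop := q ≤ 6 * (m % q) ∧ 6 * (m % q) < 3 * q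

lemma mul_div_eq_mul_mul_div_div (c m q : ℕ) {d : ℕ} (hd : 0 < d) :
    c * m / q = c * d * m / q / d := by
  rw [Nat.div_div_eq_div_mul, mul_comm q d, mul_comm c d, mul_assoc, Nat.mul_div_mul_left _ _ hd]

lemma div_add_two_mul_div_add_window_le (m q : ℕ) :
    3 * m / q + 2 * (2 * m / q) + (if FractInWindow q m then 1 else 0) ≤ 6 * m / q + m / q := by
  rcases Nat.eq_zero_or_pos q with rfl | hq
  · simp
  have h3 : 3 * m / q = 6 * m / q / 2 := mul_div_eq_mul_mul_div_div 3 m q two_pos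
  have h2 : 2 * m / q = 6 * m / q / 3 := mul_div_eq_mul_mul_div_div 2 m q three_pos
  have h1 : m / q = 6 * m / q / 6 := by
    simpa using mul_div_eq_mul_mul_div_div 1 m q (by norm_num : 0 < 6)
  have h6 : 6 * m / q = 6 * (m / q) + 6 * (m % q) / q := by
    conv_lhs => rw [← Nat.div_add_mod m q, mul_add, mul_left_comm]
    exact Nat.mul_add_div hq _ _
  have hlt : 6 * (m % q) / q < 6 :=
    (Nat.div_lt_iff_lt_mul hq).2 (by have := Nat.mod_lt m hq; omega)
  have hwin : FractInWindow q m ↔ 1 ≤ 6 * (m % q) / q ∧ 6 * (m % q) / q < 3 := by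
    rw [Nat.le_div_iff_mul_le hq, Nat.div_lt_iff_lt_mul hq, one_mul]
  rw [h3, h2, h1, h6]
  split_ifs <;> omega

lemma dvd_two_mul_mod_add {q m a : ℕ} (h : q ∣ 2 * m + a) : q ∣ 2 * (m % q) + a := by
  rw [Nat.dvd_iff_mod_eq_zero] at h ⊢
  simpa [Nat.add_mod, Nat.mul_mod] using h

lemma fractInWindow_of_dvd_two_mul_add_one {q m : ℕ} (hq : 2 ≤ q) (h : q ∣ 2 * m + 1) :
    FractInWindow q m := by
  have := Nat.eq_of_dvd_of_lt_two_mul (by omega) (dvd_two_mul_mod_add h)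
    (by have := Nat.mod_lt m (by omega : 0 < q); omega)
  constructor <;> omega

lemma fractInWindow_of_dvd_two_mul_add_seven {q m : ℕ} (hq : 2 ≤ q) (h : q ∣ 2 * m + 7)
    (h315 : ¬ q ∣ 315) : FractInWindow q m := by
  by_cases hq11 : q < 11
  · interval_cases q <;> omega
  obtain ⟨c, hc⟩ := dvd_two_mul_mod_add h
  have hr := Nat.mod_lt m (by omega : 0 < q)
  have hc3 : c < 3 := Nat.lt_of_mul_lt_mul_left (a := q) (by omega)
  interval_cases c <;> constructor <;> omega

lemma ite_dvd_two_mul_add_le {q : ℕ} (m : ℕ) (hq : 2 ≤ q) :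
    (if q ∣ 2 * m + 1 then 1 else 0) + (if q ∣ 2 * m + 7 then 1 else 0)
      ≤ (if FractInWindow q m then 1 else 0) + (if q ∣ 315 then 1 else 0) := by
  have w1 := fractInWindow_of_dvd_two_mul_add_one (m := m) hq
  have w7 := fractInWindow_of_dvd_two_mul_add_seven (m := m) hq
  have both (h1 : q ∣ 2 * m + 1) (h7 : q ∣ 2 * m + 7) : q ∣ 315 := by
    have h6 : q ∣ 6 := by simpa using Nat.dvd_sub h7 h1
    have : q ≤ 6 := Nat.le_of_dvd (by norm_num) h6
    interval_cases q <;> omega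
  split_ifs <;> omega

lemma fractInWindow_two_pow_log_add_two {n : ℕ} (hn : 0 < n) :
    FractInWindow (2 ^ (Nat.log 2 n + 2)) n := by
  unfold FractInWindow
  have hle := Nat.pow_log_le_self 2 hn.ne'
  have hlt := Nat.lt_pow_succ_log_self one_lt_two n
  rw [pow_succ] at hlt
  rw [pow_add, Nat.mod_eq_of_lt (by omega)]
  constructor <;> omega

section Factorization

variable {p : ℕ} (hp : p.Prime) {n b : ℕ} (hb : 6 * n + 315 < p ^ b)
include hp hb

lemma factorization_factorial_add_card_window_le :
    2 * (2 * n)!.factorization p + (3 * n)!.factorization p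
        + #{i ∈ Ico 1 b | FractInWindow (p ^ i) n}
      ≤ (6 * n)!.factorization p + (n)!.factorization p := by
  have hlog {m : ℕ} (hm : m ≤ 6 * n) : Nat.log p m < b :=
    (Nat.log_mono_right (by omega : m ≤ 6 * n + 315)).trans_lt
      (Nat.log_lt_of_lt_pow (by omega) hb)
  rw [Nat.factorization_factorial hp (hlog (by omega)),
    Nat.factorization_factorial hp (hlog (by omega)), Nat.factorization_factorial hp (hlog le_rfl),
    Nat.factorization_factorial hp (hlog (by omega)),
    card_filter, mul_sum, ← sum_add_distrib, ← sum_add_distrib, ← sum_add_distrib]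
  exact sum_le_sum fun i _ => by
    have := div_add_two_mul_div_add_window_le n (p ^ i)
    omega

lemma factorization_two_mul_add_le (hn : 0 < n) :
    (2 : ℕ).factorization p + (2 * n + 1).factorization p + (2 * n + 7).factorization p
      ≤ #{i ∈ Ico 1 b | FractInWindow (p ^ i) n} + (315 : ℕ).factorization p := by
  rcases eq_or_ne p 2 with rfl | hp2
  · have hw := fractInWindow_two_pow_log_add_two hn
    have hlt : Nat.log 2 n + 2 < b := by
      rw [← Nat.pow_lt_pow_iff_right one_lt_two]
      have := Nat.pow_log_le_self 2 hn.ne'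
      rw [pow_add]
      omega
    have hpos : 0 < #{i ∈ Ico 1 b | FractInWindow (2 ^ i) n} :=
      card_pos.2 ⟨_, mem_filter.2 ⟨mem_Ico.2 ⟨by omega, hlt⟩, hw⟩⟩
    rw [hp.factorization_self, Nat.factorization_eq_zero_of_not_dvd (by omega),
      Nat.factorization_eq_zero_of_not_dvd (by omega)]
    omega
  · have h2 : (2 : ℕ).factorization p = 0 :=
      Nat.factorization_eq_zero_of_not_dvd fun h =>
        hp2 ((Nat.prime_dvd_prime_iff_eq hp Nat.prime_two).1 h)
    rw [h2, Nat.factorization_eq_card_pow_dvd_of_lt hp (by omega) (by omega : 2 * n + 1 < p ^ b),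
      Nat.factorization_eq_card_pow_dvd_of_lt hp (by omega) (by omega : 2 * n + 7 < p ^ b),
      Nat.factorization_eq_card_pow_dvd_of_lt hp (by omega) (by omega : 315 < p ^ b)]
    simp only [card_filter, zero_add, ← sum_add_distrib]
    refine sum_le_sum fun i hi => ite_dvd_two_mul_add_le n ?_
    exact hp.two_le.trans (Nat.le_self_pow (Nat.one_le_iff_ne_zero.1 (mem_Ico.1 hi).1) p)

end Factorization

lemma mul_choose_dvd_mul_choose_iff (a c n : ℕ) :
    a * (2 * n).choose n ∣ c * ((6 * n).choose (3 * n) * (3 * n).choose n)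
      ↔ a * ((2 * n)! * (2 * n)! * (3 * n)!) ∣ c * ((6 * n)! * (n)!) := by
  have e6 := Nat.choose_mul_factorial_mul_factorial (by omega : 3 * n ≤ 6 * n)
  have e3 := Nat.choose_mul_factorial_mul_factorial (by omega : n ≤ 3 * n)
  have e2 := Nat.choose_mul_factorial_mul_factorial (by omega : n ≤ 2 * n)
  rw [show 6 * n - 3 * n = 3 * n by omega] at e6
  rw [show 3 * n - n = 2 * n by omega] at e3
  rw [show 2 * n - n = n by omega] at e2
  have hK : 0 < (3 * n)! * (2 * n)! * (n)! * (n)! := by positivity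
  have hL : a * (2 * n).choose n * ((3 * n)! * (2 * n)! * (n)! * (n)!)
      = a * ((2 * n)! * (2 * n)! * (3 * n)!) := by
    rw [← e2]; ring
  have hR :
      c * ((6 * n).choose (3 * n) * (3 * n).choose n) * ((3 * n)! * (2 * n)! * (n)! * (n)!)
        = c * ((6 * n)! * (n)!) := by
    rw [← e6, ← e3]; ring
  rw [← Nat.mul_dvd_mul_iff_right hK, hL, hR]

theorem S_n_mod_2n_add_7 (n : ℕ) (hn : 0 < n) :
    2 * (2 * n + 1) * (2 * n + 7) * Nat.choose (2 * n) n ∣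
      315 * (Nat.choose (6 * n) (3 * n) * Nat.choose (3 * n) n) := by
  rw [mul_choose_dvd_mul_choose_iff]
  refine (Nat.factorization_prime_le_iff_dvd (by positivity) (by positivity)).1 fun p hp => ?_
  have hb : 6 * n + 315 < p ^ (6 * n + 315) := Nat.lt_pow_self hp.one_lt
  have hfact := factorization_factorial_add_card_window_le hp hb
  have hlin := factorization_two_mul_add_le hp hb hn
  simp only [ne_eq, mul_eq_zero, OfNat.ofNat_ne_zero, Nat.add_eq_zero_iff, false_or, one_ne_zero,
    and_false, or_self, not_false_eq_true, Nat.factorial_ne_zero, Nat.factorization_mul,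
    Finsupp.coe_add, Pi.add_apply, ge_iff_le]
  omega
end

section
/- For every positive integer n, the number 2(2n+1)(2n+9)·C(2n,n) divides 6435·C(6n,3n)·C(3n,n); equivalently, 6435·S_n ≡ 0 (mod 2n+9), where S_n = C(6n,3n)·C(3n,n)/(2(2n+1)·C(2n,n)). -/
/-!
Clearing denominators, the claim is `2(2n+1)(2n+9) (2n)!² (3n)! ∣ 6435 (6n)! n!`, which we check
prime by prime with Legendre's formula. For `q = p ^ i` the floor combination
`⌊6n/q⌋ + ⌊n/q⌋ - 2⌊2n/q⌋ - ⌊3n/q⌋` is nonnegative, and it is at least `1` when the fractional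
part of `n/q` lies in `[1/6, 1/2)`. This happens whenever `q ∣ 2n+1` with `q ≥ 3`, and whenever
`q ∣ 2n+9` with `q ≥ 14`; of the smaller odd `q`, only `7` still works, and
`3, 5, 9, 11, 13` all divide `6435 = 3² · 5 · 11 · 13`. For `p = 2` the factor `2` is paid for by
`q = 2 ^ ⌊log₂ 6n⌋`, where `6n/q ∈ [1, 2)`.
-/

open Nat Finset

section FloorCombination

variable {q : ℕ}

theorem mul_div_eq_mul_div_add_mul_mod_div (hq : 0 < q) (c n : ℕ) :
    c * n / q = c * (n / q) + c * (n % q) / q := by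
  conv_lhs => rw [← Nat.div_add_mod n q, mul_add, mul_left_comm, Nat.mul_add_div hq]

theorem floors_add_le_iff_mod (hq : 0 < q) (n e : ℕ) :
    2 * (2 * n / q) + 3 * n / q + e ≤ 6 * n / q + n / q ↔
      2 * (2 * (n % q) / q) + 3 * (n % q) / q + e ≤ 6 * (n % q) / q := by
  have hmod : n % q / q = 0 := Nat.div_eq_of_lt (Nat.mod_lt n hq)
  rw [mul_div_eq_mul_div_add_mul_mod_div hq 2, mul_div_eq_mul_div_add_mul_mod_div hq 3,
    mul_div_eq_mul_div_add_mul_mod_div hq 6]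
  omega

theorem floors_le_of_lt {r : ℕ} (hr : r < q) : 2 * (2 * r / q) + 3 * r / q ≤ 6 * r / q := by
  have hq : 0 < q := by omega
  have h2 : 2 * r / q < 2 := (Nat.div_lt_iff_lt_mul hq).2 (by omega)
  have h3 : 3 * (2 * r / q) ≤ 6 * r / q := by
    simpa only [← mul_assoc, Nat.reduceMul] using Nat.mul_div_le_mul_div_assoc 3 (2 * r) q
  have h6 : 2 * (3 * r / q) ≤ 6 * r / q := by
    simpa only [← mul_assoc, Nat.reduceMul] using Nat.mul_div_le_mul_div_assoc 2 (3 * r) q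
  omega

theorem floors_lt_of_le_six_mul {r : ℕ} (h6 : q ≤ 6 * r) (h2 : 2 * r < q) :
    2 * (2 * r / q) + 3 * r / q < 6 * r / q := by
  have hq : 0 < q := by omega
  have ha : 2 * r / q = 0 := Nat.div_eq_of_lt h2
  have hc : 1 ≤ 6 * r / q := (Nat.le_div_iff_mul_le hq).2 (by omega)
  have hbc : 2 * (3 * r / q) ≤ 6 * r / q := by
    simpa only [← mul_assoc, Nat.reduceMul] using Nat.mul_div_le_mul_div_assoc 2 (3 * r) q
  omega

theorem floors_le (q n : ℕ) : 2 * (2 * n / q) + 3 * n / q ≤ 6 * n / q + n / q := by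
  rcases q.eq_zero_or_pos with rfl | hq
  · simp
  · simpa using (floors_add_le_iff_mod hq n 0).2 (floors_le_of_lt (Nat.mod_lt n hq))

theorem two_mul_mod_add_eq_of_dvd_s4 {m n : ℕ} (hm : Odd m) (hmq : m < q)
    (hdvd : q ∣ 2 * n + m) : 2 * (n % q) + m = q := by
  have hq : 0 < q := by omega
  obtain ⟨t, ht⟩ : q ∣ 2 * (n % q) + m :=
    ((((Nat.mod_modEq n q).mul_left 2).add_right m).dvd_iff dvd_rfl).2 hdvd
  have hr := Nat.mod_lt n hq
  -- `2 * (n % q) + m` is an odd multiple of `q` below `3 * q`.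
  have ht3 : t < 3 := by
    by_contra! h
    nlinarith
  obtain ⟨k, rfl⟩ := hm
  interval_cases t <;> omega

theorem floors_lt_of_dvd_two_mul_add {m n : ℕ} (hm : Odd m) (hmq : 3 * m ≤ 2 * q)
    (hdvd : q ∣ 2 * n + m) : 2 * (2 * n / q) + 3 * n / q < 6 * n / q + n / q := by
  have hm0 : 0 < m := hm.pos
  have hr : 2 * (n % q) + m = q := two_mul_mod_add_eq_of_dvd_s4 hm (by omega) hdvd
  exact (floors_add_le_iff_mod (by omega) n 1).2 (floors_lt_of_le_six_mul (by omega) (by omega))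

theorem floors_add_ite_le (n : ℕ) (hq : Odd q) (hq3 : 3 ≤ q) :
    2 * (2 * n / q) + 3 * n / q +
        ((if q ∣ 2 * n + 1 then 1 else 0) + if q ∣ 2 * n + 9 then 1 else 0) ≤
      6 * n / q + n / q + if q ∣ 6435 then 1 else 0 := by
  have hle := floors_le q n
  by_cases h1 : q ∣ 2 * n + 1
  · have h9 : ¬ q ∣ 2 * n + 9 := fun h9 => by
      rw [show 2 * n + 9 = 2 * n + 1 + 2 ^ 3 by ring] at h9
      have h8 : q ∣ 2 ^ 3 := (Nat.dvd_add_right h1).1 h9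
      exact absurd (Nat.Coprime.eq_one_of_dvd (Nat.Coprime.pow_right 3
        hq.coprime_two_right) h8) (by omega)
    have hlt := floors_lt_of_dvd_two_mul_add odd_one (by omega) h1
    simp only [h1, h9, if_true, if_false]
    omega
  by_cases h9 : q ∣ 2 * n + 9
  · by_cases h6435 : q ∣ 6435
    · simp only [h1, h9, h6435, if_true, if_false]
      omega
    have hodd := Nat.odd_iff.1 hq
    have hq7 : q = 7 ∨ 14 ≤ q := by
      by_contra! h
      obtain ⟨h7, h14⟩ := h
      interval_cases q <;> omega
    simp only [h1, h9, h6435, if_true, if_false]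
    rcases hq7 with rfl | hq14
    · omega
    · have := floors_lt_of_dvd_two_mul_add (by decide : Odd 9) (by omega) h9
      omega
  · simp only [h1, h9, if_false]
    omega

end FloorCombination

theorem sum_floors_add_card_le (n : ℕ) {p : ℕ} (hp : 3 ≤ p) (hodd : Odd p) (b : ℕ) :
    ∑ i ∈ Ico 1 b, (2 * (2 * n / p ^ i) + 3 * n / p ^ i) +
        (#{i ∈ Ico 1 b | p ^ i ∣ 2 * n + 1} + #{i ∈ Ico 1 b | p ^ i ∣ 2 * n + 9}) ≤
      ∑ i ∈ Ico 1 b, (6 * n / p ^ i + n / p ^ i) + #{i ∈ Ico 1 b | p ^ i ∣ 6435} := by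
  simp only [card_filter, ← sum_add_distrib]
  refine sum_le_sum fun i hi => floors_add_ite_le n hodd.pow ?_
  exact hp.trans (Nat.le_self_pow (Nat.pos_iff_ne_zero.1 (mem_Ico.1 hi).1) p)

theorem sum_floors_two_pow_lt {n b : ℕ} (hn : 0 < n) (hb : log 2 (6 * n) < b) :
    ∑ i ∈ Ico 1 b, (2 * (2 * n / 2 ^ i) + 3 * n / 2 ^ i) <
      ∑ i ∈ Ico 1 b, (6 * n / 2 ^ i + n / 2 ^ i) := by
  refine sum_lt_sum (fun i _ => floors_le _ n) ⟨log 2 (6 * n), ?_, ?_⟩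
  · exact mem_Ico.2 ⟨Nat.le_log_of_pow_le one_lt_two (by omega), hb⟩
  · have hle := Nat.pow_log_le_self 2 (show 6 * n ≠ 0 by omega)
    have hlt := Nat.lt_pow_succ_log_self one_lt_two (6 * n)
    rw [pow_succ] at hlt
    have hmod : n % 2 ^ log 2 (6 * n) = n := Nat.mod_eq_of_lt (by omega)
    refine (floors_add_le_iff_mod (by positivity) n 1).2 ?_
    rw [hmod]
    exact floors_lt_of_le_six_mul hle (by omega)

theorem factorization_le_factorization {n p : ℕ} (hn : 0 < n) (hp : p.Prime) :
    (2 * (2 * n + 1) * (2 * n + 9) * ((2 * n)! ^ 2 * (3 * n)!)).factorization p ≤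
      (6435 * ((6 * n)! * n !)).factorization p := by
  have hb : 6 * n + 6435 < p ^ (6 * n + 6435) := Nat.lt_pow_self hp.one_lt
  have hlog : ∀ m ≤ 6 * n, log p m < 6 * n + 6435 := fun m hm =>
    (Nat.log_le_self p m).trans_lt (by omega)
  have hcard : ∀ m, 0 < m → m ≤ 6 * n + 6435 →
      m.factorization p = #{i ∈ Ico 1 (6 * n + 6435) | p ^ i ∣ m} := fun m hm hmb =>
    Nat.factorization_eq_card_pow_dvd_of_lt hp hm (by omega)
  simp (disch := positivity) only [Nat.factorization_mul, Nat.factorization_pow,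
    Finsupp.add_apply, Finsupp.smul_apply, smul_eq_mul]
  rw [factorization_factorial hp (hlog _ (by omega)),
    factorization_factorial hp (hlog _ (by omega)), factorization_factorial hp (hlog _ le_rfl),
    factorization_factorial hp (hlog _ (by omega))]
  rcases hp.eq_two_or_odd' with rfl | hodd
  · have hlt := sum_floors_two_pow_lt hn (hlog _ le_rfl)
    rw [Nat.prime_two.factorization_self, Nat.factorization_eq_zero_of_not_dvd (by omega),
      Nat.factorization_eq_zero_of_not_dvd (by omega),
      Nat.factorization_eq_zero_of_not_dvd (by norm_num)]
    simp only [sum_add_distrib, ← mul_sum] at hlt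
    omega
  · have hp3 : 3 ≤ p := by
      have := Nat.odd_iff.1 hodd
      have := hp.two_le
      omega
    have hp2 : ¬ p ∣ 2 := fun h => by
      have := Nat.le_of_dvd two_pos h
      omega
    have hle := sum_floors_add_card_le n hp3 hodd (6 * n + 6435)
    rw [Nat.factorization_eq_zero_of_not_dvd hp2,
      hcard (2 * n + 1) (by omega) (by omega), hcard (2 * n + 9) (by omega) (by omega),
      hcard 6435 (by omega) (by omega)]
    simp only [sum_add_distrib, ← mul_sum] at hle
    omega

theorem mul_factorials_dvd_mul_factorials {n : ℕ} (hn : 0 < n) :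
    2 * (2 * n + 1) * (2 * n + 9) * ((2 * n)! ^ 2 * (3 * n)!) ∣ 6435 * ((6 * n)! * n !) :=
  (Nat.factorization_prime_le_iff_dvd (by positivity) (by positivity)).1 fun _ hp =>
    factorization_le_factorization hn hp

theorem S_n_mod_2n_add_9 (n : ℕ) (hn : 0 < n) :
    2 * (2 * n + 1) * (2 * n + 9) * Nat.choose (2 * n) n ∣
      6435 * (Nat.choose (6 * n) (3 * n) * Nat.choose (3 * n) n) := by
  have h2 : (2 * n)! = (2 * n).choose n * n ! * n ! := by
    rw [two_mul, Nat.add_choose_mul_factorial_mul_factorial]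
  have h3 : (3 * n)! = (3 * n).choose n * (2 * n)! * n ! := by
    rw [show 3 * n = 2 * n + n by ring, Nat.add_choose_mul_factorial_mul_factorial]
  have h6 : (6 * n)! = (6 * n).choose (3 * n) * (3 * n)! * (3 * n)! := by
    rw [show 6 * n = 3 * n + 3 * n by ring, Nat.add_choose_mul_factorial_mul_factorial]
  rw [← Nat.mul_dvd_mul_iff_right (by positivity : 0 < (2 * n)! * (3 * n)! * n ! ^ 2)]
  convert mul_factorials_dvd_mul_factorials hn using 1 <;>
  · simp only [h6, h3, h2]
    ring
end

section
/- For every positive integer n, the number (10n+1)(10n+9)·C(3n,n) divides 43263·C(15n,5n)·C(5n−1,n−1); equivalently, 43263·t_n ≡ 0 (mod 10n+9), where t_n = C(15n,5n)·C(5n−1,n−1)/((10n+1)·C(3n,n)). -/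
/-!
Clearing denominators, the claim is that `5 (10n+1)(10n+9) (10n)! (4n)! (3n)!` divides
`43263 (15n)! (2n)!`, which we check prime by prime with Legendre's formula. At the level `q = p^i`
the numerator gains `⌊15x⌋ + ⌊2x⌋ - ⌊10x⌋ - ⌊4x⌋ - ⌊3x⌋ ≥ 0` over the denominator, `x = n/q`.
This step function only jumps at multiples of `1/60` and is positive on `[m/10 - 1/30, m/10)`
for every odd `m`. When `q ∣ 10n+1`, or `q ∣ 10n+9` and `q ≥ 27`, the point `x` lies in such an
interval, so every power of `p` dividing `(10n+1)(10n+9)` is paid for by one unit of surplus.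
Among the smaller prime powers dividing `10n+9`, the surplus can vanish only for
`q = 3, 9, 11, 19, 23`, all of which divide `43263 = 3² · 11 · 19 · 23`. The factor `5` is paid
for by `v₅((15n)!) + v₅((2n)!) - v₅((10n)!) - v₅((3n)!) = n > v₅((4n)!)`.
-/

open Nat Finset

/-- The level-`q` terms of Legendre's formula for `(10n)! (4n)! (3n)!`. -/
def denSum (n q : ℕ) : ℕ := 10 * n / q + 4 * n / q + 3 * n / q

/-- The level-`q` terms of Legendre's formula for `(15n)! (2n)!`. -/
def numSum (n q : ℕ) : ℕ := 15 * n / q + 2 * n / q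

lemma mul_div_eq_sixty_mul_div_div {n q c d : ℕ} (h : c * d = 60) :
    c * n / q = 60 * n / q / d := by
  have hd : 0 < d := Nat.pos_of_ne_zero (by rintro rfl; simp at h)
  rw [Nat.div_div_eq_div_mul, Nat.mul_comm q d, ← Nat.mul_div_mul_left (c * n) q hd,
    ← Nat.mul_assoc, Nat.mul_comm d c, h]

lemma denSum_eq (n q : ℕ) :
    denSum n q = 60 * n / q / 6 + 60 * n / q / 15 + 60 * n / q / 20 := by
  simp only [denSum, mul_div_eq_sixty_mul_div_div (show 10 * 6 = 60 by rfl),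
    mul_div_eq_sixty_mul_div_div (show 4 * 15 = 60 by rfl),
    mul_div_eq_sixty_mul_div_div (show 3 * 20 = 60 by rfl)]

lemma numSum_eq (n q : ℕ) : numSum n q = 60 * n / q / 4 + 60 * n / q / 30 := by
  simp only [numSum, mul_div_eq_sixty_mul_div_div (show 15 * 4 = 60 by rfl),
    mul_div_eq_sixty_mul_div_div (show 2 * 30 = 60 by rfl)]

lemma denSum_le_numSum (n q : ℕ) : denSum n q ≤ numSum n q := by
  rw [denSum_eq, numSum_eq]
  omega

/-- The bounds say `m/10 - 1/30 ≤ n/q < m/10`. -/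
lemma denSum_lt_numSum_of_near_tenth {n q m : ℕ} (hm : ¬ 2 ∣ m)
    (hlo : q * (6 * m) ≤ 60 * n + 2 * q) (hhi : 60 * n < q * (6 * m)) :
    denSum n q < numSum n q := by
  have hq : 0 < q := Nat.pos_of_ne_zero (by rintro rfl; simp at hhi)
  have hs_lo : 6 * m - 2 ≤ 60 * n / q := by
    rw [Nat.le_div_iff_mul_le hq, Nat.sub_mul, Nat.mul_comm _ q]
    omega
  have hs_hi : 60 * n / q < 6 * m := by
    rw [Nat.div_lt_iff_lt_mul hq]
    linarith
  rw [denSum_eq, numSum_eq]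
  omega

lemma denSum_lt_numSum_of_dvd {n q r : ℕ} (hr : ¬ 2 ∣ r) (hq : 3 * r ≤ q)
    (h : q ∣ 10 * n + r) : denSum n q < numSum n q := by
  obtain ⟨m, hm⟩ := h
  have hqm : q * (6 * m) = 6 * (q * m) := by ring
  refine denSum_lt_numSum_of_near_tenth (m := m) (fun h2 => ?_) (by omega) (by omega)
  have := dvd_mul_of_dvd_right h2 q
  omega

lemma not_isPrimePow_twentyOne : ¬ IsPrimePow 21 := fun h => by
  have := (Nat.Coprime.isPrimePow_dvd_mul (by norm_num : Nat.Coprime 3 7) h).mp dvd_rfl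
  norm_num at this

lemma coprime_ten_mul_add_one_ten_mul_add_nine (n : ℕ) :
    Nat.Coprime (10 * n + 1) (10 * n + 9) := by
  rw [show 10 * n + 9 = 8 + (10 * n + 1) by ring, Nat.coprime_add_self_right,
    show 8 = 2 ^ 3 by rfl, Nat.coprime_pow_right_iff (by norm_num), Nat.coprime_two_right]
  exact ⟨5 * n, by ring⟩

lemma denSum_lt_numSum_of_isPrimePow {n q : ℕ} (hq : IsPrimePow q)
    (hdvd : q ∣ (10 * n + 1) * (10 * n + 9)) (h43263 : ¬ q ∣ 43263) :
    denSum n q < numSum n q := by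
  rcases ((coprime_ten_mul_add_one_ten_mul_add_nine n).isPrimePow_dvd_mul hq).mp hdvd with h | h
  · rcases hq.two_le.eq_or_lt with rfl | hq3
    · omega
    · exact denSum_lt_numSum_of_dvd (r := 1) (by omega) hq3 h
  · by_cases hq27 : 27 ≤ q
    · exact denSum_lt_numSum_of_dvd (r := 9) (by omega) hq27 h
    have := hq.two_le
    -- `q = 7, 13, 17` are checked directly, `21` is no prime power, and the other `q < 27`
    -- divide `43263` or cannot divide `10n+9`
    interval_cases q <;> first
      | (simp only [denSum, numSum]; omega)
      | exact absurd hq not_isPrimePow_twentyOne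

lemma padicValNat_add_sum_le_of_forall_lt {p y c b : ℕ} [Fact p.Prime] {F G : ℕ → ℕ}
    (hy : y ≠ 0) (hc : c ≠ 0) (hb : log p y < b) (hle : ∀ i, F i ≤ G i)
    (hlt : ∀ i, 1 ≤ i → p ^ i ∣ y → ¬ p ^ i ∣ c → F i < G i) :
    padicValNat p y + ∑ i ∈ Ico 1 b, F i ≤ padicValNat p c + ∑ i ∈ Ico 1 b, G i := by
  set S := Ico (padicValNat p c + 1) (padicValNat p y + 1)
  have hS : S ⊆ Ico 1 b := fun i hi => by
    have := padicValNat_le_nat_log (p := p) y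
    simp only [S, mem_Ico] at hi ⊢
    omega
  have hstep : ∀ i ∈ Ico 1 b, F i + (if i ∈ S then 1 else 0) ≤ G i := fun i hi => by
    split_ifs with hiS
    · simp only [S, mem_Ico] at hi hiS
      refine hlt i hi.1 ((padicValNat_dvd_iff_le hy).mpr (by omega)) ?_
      rw [padicValNat_dvd_iff_le hc]
      omega
    · simpa using hle i
  have hsum := sum_le_sum hstep
  rw [sum_add_distrib, sum_ite_mem, inter_eq_right.mpr hS, sum_const, smul_eq_mul, mul_one,
    card_Ico] at hsum
  omega

lemma sum_denSum {p n b : ℕ} [Fact p.Prime] (hb : log p (10 * n) < b) :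
    ∑ i ∈ Ico 1 b, denSum n (p ^ i)
      = padicValNat p (10 * n)! + padicValNat p (4 * n)! + padicValNat p (3 * n)! := by
  have hlog : ∀ c ≤ 10, log p (c * n) < b := fun c hc =>
    (log_mono_right (Nat.mul_le_mul_right n hc)).trans_lt hb
  simp only [denSum, sum_add_distrib, padicValNat_factorial (hlog _ le_rfl),
    padicValNat_factorial (hlog 4 (by norm_num)), padicValNat_factorial (hlog 3 (by norm_num))]

lemma sum_numSum {p n b : ℕ} [Fact p.Prime] (hb : log p (15 * n) < b) :
    ∑ i ∈ Ico 1 b, numSum n (p ^ i) = padicValNat p (15 * n)! + padicValNat p (2 * n)! := by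
  have hlog : log p (2 * n) < b := (log_mono_right (by omega)).trans_lt hb
  simp only [numSum, sum_add_distrib, padicValNat_factorial hb, padicValNat_factorial hlog]

lemma padicValNat_factorial_sub_one_mul_lt {p n : ℕ} [hp : Fact p.Prime] (hn : n ≠ 0) :
    padicValNat p ((p - 1) * n)! < n := by
  have hp1 : 0 < p - 1 := Nat.sub_pos_of_lt hp.out.one_lt
  exact Nat.lt_of_mul_lt_mul_left
    (sub_one_mul_padicValNat_factorial_lt_of_ne_zero p (Nat.mul_ne_zero hp1.ne' hn))

lemma padicValNat_denominator_le_numerator (p : ℕ) [hp : Fact p.Prime] {n : ℕ} (hn : n ≠ 0) :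
    padicValNat p 5 + (padicValNat p (10 * n + 1) + padicValNat p (10 * n + 9))
        + (padicValNat p (10 * n)! + padicValNat p (4 * n)! + padicValNat p (3 * n)!)
      ≤ padicValNat p 43263 + (padicValNat p (15 * n)! + padicValNat p (2 * n)!) := by
  rw [← padicValNat.mul (by positivity) (by positivity)]
  rcases eq_or_ne p 5 with rfl | hp5
  · have h5 : ¬ 5 ∣ (10 * n + 1) * (10 * n + 9) := by
      rw [Nat.Prime.dvd_mul hp.out]
      omega
    rw [padicValNat.eq_zero_of_not_dvd h5, padicValNat_self,
      show 10 * n = 5 * (2 * n) by ring, show 15 * n = 5 * (3 * n) by ring,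
      padicValNat_factorial_mul, padicValNat_factorial_mul]
    have : padicValNat 5 (4 * n)! < n := padicValNat_factorial_sub_one_mul_lt hn
    omega
  · set b := log p ((10 * n + 1) * (10 * n + 9)) + 1
    have hb : ∀ c ≤ 15, log p (c * n) < b := fun c hc =>
      Nat.lt_succ_of_le (log_mono_right (by nlinarith))
    rw [padicValNat.eq_zero_of_not_dvd fun h => hp5 ((prime_dvd_prime_iff_eq hp.out prime_five).mp h),
      ← sum_denSum (hb 10 (by norm_num)), ← sum_numSum (hb 15 le_rfl), zero_add]
    exact padicValNat_add_sum_le_of_forall_lt (by positivity) (by norm_num) (lt_add_one _)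
      (fun i => denSum_le_numSum n _) fun i hi hdvd h43263 =>
        denSum_lt_numSum_of_isPrimePow (hp.out.isPrimePow.pow (by omega)) hdvd h43263

lemma denominator_dvd_numerator {n : ℕ} (hn : n ≠ 0) :
    5 * ((10 * n + 1) * (10 * n + 9)) * ((10 * n)! * (4 * n)! * (3 * n)!)
      ∣ 43263 * ((15 * n)! * (2 * n)!) := by
  rw [← factorization_prime_le_iff_dvd (by positivity) (by positivity)]
  intro p hp
  have := Fact.mk hp
  simp only [factorization_def _ hp]
  repeat rw [padicValNat.mul (by positivity) (by positivity)]
  exact padicValNat_denominator_le_numerator p hn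

theorem t_n_mod_10n_add_9 (n : ℕ) (hn : 0 < n) :
    (10 * n + 1) * (10 * n + 9) * Nat.choose (3 * n) n ∣
      43263 * (Nat.choose (15 * n) (5 * n) * Nat.choose (5 * n - 1) (n - 1)) := by
  have h15 : (15 * n).choose (5 * n) * (5 * n)! * (10 * n)! = (15 * n)! := by
    simpa [show 15 * n - 5 * n = 10 * n by omega] using
      choose_mul_factorial_mul_factorial (show 5 * n ≤ 15 * n by omega)
  have h5 : (5 * n - 1).choose (n - 1) * (n - 1)! * (4 * n)! = (5 * n - 1)! := by
    simpa [show 5 * n - 1 - (n - 1) = 4 * n by omega] using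
      choose_mul_factorial_mul_factorial (show n - 1 ≤ 5 * n - 1 by omega)
  have h3 : (3 * n).choose n * n ! * (2 * n)! = (3 * n)! := by
    simpa [show 3 * n - n = 2 * n by omega] using
      choose_mul_factorial_mul_factorial (show n ≤ 3 * n by omega)
  have hfac5 : 5 * n * (5 * n - 1)! = (5 * n)! := mul_factorial_pred (by omega)
  have hfac1 : n * (n - 1)! = n ! := mul_factorial_pred (by omega)
  have hK : 0 < 5 * (10 * n)! * (4 * n)! * n ! * (2 * n)! * ((5 * n)! * (n - 1)!) := by
    positivity
  rw [← Nat.mul_dvd_mul_iff_right hK]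
  convert Nat.mul_dvd_mul_right (denominator_dvd_numerator hn.ne') ((5 * n)! * (n - 1)!) using 1
  · rw [← h3]
    ring
  · rw [← h15, ← hfac5, ← h5, ← hfac1]
    ring
end

section
/- For all positive integers a, b, m, n, the number m+n divides a·m·C(am+bm−1, am)·C(an+bn, an). -/
/-!
By Kummer's theorem, `v_p (C(u + v, u))` counts the indices `i ≥ 1` at which adding `u` and `v`
in base `p` carries, i.e. `p ^ i ≤ u % p ^ i + v % p ^ i`. Put `x = a m`, `y = b m`, `x' = a n`,
`y' = b n`. A power `q = p ^ i` dividing `m + n` divides `x + x'` and `y + y'`; if moreover `q ∤ x`,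
then `x % q + x' % q = q`, and comparing `y % q` with `y' % q` shows that `x + (y - 1)` or `x' + y'`
carries at `q`. So every `i` with `v_p x < i ≤ v_p (m + n)` is counted by one of the two binomial
coefficients.
-/

open Finset

theorem Nat.mod_eq_zero_or_mod_add_mod_eq_of_dvd_add {q u v : ℕ} (h : q ∣ u + v) :
    u % q = 0 ∨ u % q + v % q = q := by
  rcases Nat.eq_zero_or_pos q with rfl | hq
  · simp_all
  have hsum := Nat.add_mod_eq_ite (m := u) (n := v) (k := q)
  have hu := Nat.mod_lt u hq
  have hv := Nat.mod_lt v hq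
  rw [Nat.mod_eq_zero_of_dvd h] at hsum
  split_ifs at hsum <;> omega

theorem carry_of_dvd_add {q x y x' y' : ℕ} (hx : q ∣ x + x') (hy : q ∣ y + 1 + y') (hqx : ¬ q ∣ x) :
    q ≤ x % q + y % q ∨ q ≤ x' % q + y' % q := by
  have hq : 1 < q := by
    by_contra! hq
    interval_cases q <;> simp_all
  have hx0 : x % q ≠ 0 := mt Nat.dvd_of_mod_eq_zero hqx
  have hxx' := Nat.mod_eq_zero_or_mod_add_mod_eq_of_dvd_add hx
  have hyy' := Nat.mod_eq_zero_or_mod_add_mod_eq_of_dvd_add hy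
  have hsucc := Nat.add_mod_eq_ite (m := y) (n := 1) (k := q)
  rw [Nat.mod_eq_of_lt hq] at hsucc
  have := Nat.mod_lt x (by omega : 0 < q)
  have := Nat.mod_lt y (by omega : 0 < q)
  have := Nat.mod_lt y' (by omega : 0 < q)
  split_ifs at hsucc <;> omega

theorem prime_pow_dvd_mul_choose_mul_choose {p k x y x' y' : ℕ} (hp : p.Prime)
    (hx : p ^ k ∣ x + x') (hy : p ^ k ∣ y + y') :
    p ^ k ∣ x * (x + y - 1).choose x * (x' + y').choose x' := by
  rcases Nat.eq_zero_or_pos x with rfl | hx0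
  · simp
  obtain _ | y := y
  · simp [Nat.choose_eq_zero_of_lt (Nat.sub_lt hx0 one_pos)]
  have := Fact.mk hp
  rw [show x + (y + 1) - 1 = y + x by omega, add_comm x' y']
  have hC := Nat.choose_ne_zero (Nat.le_add_left x y)
  have hC' := Nat.choose_ne_zero (Nat.le_add_left x' y')
  set B := k + (y + x) + (y' + x') + 1
  rw [padicValNat_dvd_iff_le (by positivity), padicValNat.mul (by positivity) hC',
    padicValNat.mul hx0.ne' hC, padicValNat_choose' (b := B) (by grind [Nat.log_le_self]),
    padicValNat_choose' (b := B) (by grind [Nat.log_le_self])]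
  have hcarries : Ico (padicValNat p x + 1) (k + 1) ⊆
      {i ∈ Ico 1 B | p ^ i ≤ x % p ^ i + y % p ^ i} ∪
        {i ∈ Ico 1 B | p ^ i ≤ x' % p ^ i + y' % p ^ i} := by
    intro i hi
    rw [mem_Ico] at hi
    have hik : p ^ i ∣ p ^ k := pow_dvd_pow p (by omega)
    have hix : ¬ p ^ i ∣ x := by
      rw [padicValNat_dvd_iff_le hx0.ne']
      omega
    have hiB : i ∈ Ico 1 B := mem_Ico.2 ⟨by omega, by omega⟩
    rcases carry_of_dvd_add (hik.trans hx) (hik.trans hy) hix with h | h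
    · exact mem_union_left _ (mem_filter.2 ⟨hiB, h⟩)
    · exact mem_union_right _ (mem_filter.2 ⟨hiB, h⟩)
  have := (card_le_card hcarries).trans (card_union_le _ _)
  rw [Nat.card_Ico] at this
  omega

theorem dvd_mul_choose_mul_choose {d x y x' y' : ℕ} (hx : d ∣ x + x') (hy : d ∣ y + y') :
    d ∣ x * (x + y - 1).choose x * (x' + y').choose x' :=
  (Nat.dvd_iff_prime_pow_dvd_dvd _ d).2 fun _ _ hp hpk =>
    prime_pow_dvd_mul_choose_mul_choose hp (hpk.trans hx) (hpk.trans hy)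

theorem m_add_n_dvd_general (a b m n : ℕ) :
    m + n ∣ a * m * Nat.choose (a * m + b * m - 1) (a * m) * Nat.choose (a * n + b * n) (a * n) :=
  dvd_mul_choose_mul_choose (by rw [← mul_add]; exact dvd_mul_left _ _)
    (by rw [← mul_add]; exact dvd_mul_left _ _)

theorem m_add_n_dvd (a b m n : ℕ) (ha : 0 < a) (hb : 0 < b) (hm : 0 < m) (hn : 0 < n) :
    m + n ∣ a * m * Nat.choose (a * m + b * m - 1) (a * m) * Nat.choose (a * n + b * n) (a * n) :=
  m_add_n_dvd_general a b m n
end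

section
/- For all positive integers m and n, the number 2(m+n) divides m·C(2m,m)·C(2n,n). -/
/-!
The super Catalan number `(2m)! (2n)! / (m! n! (m+n)!) = C(2m,m) C(2n,n) / C(m+n,m)` is an
integer: by Legendre's formula this reduces to `⌊x⌋ + ⌊y⌋ + ⌊x+y⌋ ≤ ⌊2x⌋ + ⌊2y⌋`. It is even when
`m + n ≠ 0`, since `v₂((2k)!) = v₂(k!) + k` while `v₂((m+n)!) < m + n`. Hence
`2 C(m+n,m) ∣ C(2m,m) C(2n,n)`, and `m C(m+n,m) = (m+n) C(m+n-1,m-1)` supplies the factor `m + n`.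
-/

open Nat

namespace Nat

theorem div_add_div_add_add_div_le (m n k : ℕ) :
    m / k + n / k + (m + n) / k ≤ 2 * m / k + 2 * n / k := by
  rcases k.eq_zero_or_pos with rfl | hk
  · simp
  have := Nat.mod_lt m hk
  have := Nat.mod_lt n hk
  rw [two_mul, two_mul, Nat.add_div hk, Nat.add_div hk, Nat.add_div hk]
  split_ifs <;> omega

theorem factorization_factorial_add_le {p : ℕ} (hp : p.Prime) (m n : ℕ) :
    (m !).factorization p + (n !).factorization p + ((m + n)!).factorization p ≤
      ((2 * m)!).factorization p + ((2 * n)!).factorization p := by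
  have hb {k : ℕ} (hk : k ≤ 2 * (m + n)) : log p k < log p (2 * (m + n)) + 1 :=
    lt_add_one_of_le (log_mono_right hk)
  simp only [factorization_factorial hp (hb (k := m) (by omega)),
    factorization_factorial hp (hb (k := n) (by omega)),
    factorization_factorial hp (hb (k := m + n) (by omega)),
    factorization_factorial hp (hb (k := 2 * m) (by omega)),
    factorization_factorial hp (hb (k := 2 * n) (by omega)), ← Finset.sum_add_distrib]
  exact Finset.sum_le_sum fun i _ ↦ div_add_div_add_add_div_le m n (p ^ i)

theorem factorization_two_factorial_add_lt {m n : ℕ} (h : m + n ≠ 0) :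
    (m !).factorization 2 + (n !).factorization 2 + ((m + n)!).factorization 2 <
      ((2 * m)!).factorization 2 + ((2 * n)!).factorization 2 := by
  have : Fact (2).Prime := ⟨prime_two⟩
  have hlt : ((m + n)!).factorization 2 < m + n := by
    rw [factorization_def _ prime_two]
    exact padicValNat_factorial_lt_of_ne_zero 2 h
  rw [factorization_factorial_mul prime_two, factorization_factorial_mul prime_two]
  omega

theorem two_mul_factorial_mul_factorial_mul_factorial_add_dvd {m n : ℕ} (h : m + n ≠ 0) :
    2 * (m ! * n ! * (m + n)!) ∣ (2 * m)! * (2 * n)! := by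
  rw [← factorization_prime_le_iff_dvd (by positivity) (by positivity)]
  intro p hp
  simp only [factorization_mul, ne_eq, factorial_ne_zero, mul_eq_zero, two_ne_zero,
    not_false_eq_true, or_self, Finsupp.add_apply]
  rcases eq_or_ne p 2 with rfl | hp2
  · have := factorization_two_factorial_add_lt h
    rw [prime_two.factorization_self]
    omega
  · have := factorization_factorial_add_le hp m n
    rw [factorization_eq_zero_of_not_dvd fun h2 ↦ hp2 ((prime_dvd_prime_iff_eq hp prime_two).1 h2)]
    omega

theorem two_mul_choose_add_dvd_centralBinom_mul {m n : ℕ} (h : m + n ≠ 0) :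
    2 * (m + n).choose m ∣ centralBinom m * centralBinom n := by
  have hfac : 0 < m ! * n ! * (m ! * n !) := by positivity
  rw [← Nat.mul_dvd_mul_iff_right hfac]
  have hcentral (k : ℕ) : centralBinom k * k ! * k ! = (2 * k)! := by
    rw [centralBinom_eq_two_mul_choose, two_mul, add_choose_mul_factorial_mul_factorial]
  have hchoose := choose_mul_factorial_mul_factorial (Nat.le_add_right m n)
  rw [Nat.add_sub_cancel_left] at hchoose
  convert two_mul_factorial_mul_factorial_mul_factorial_add_dvd h using 1
  · rw [← hchoose]; ring
  · rw [← hcentral, ← hcentral]; ring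

theorem add_dvd_mul_choose_add (m n : ℕ) : m + n ∣ m * (m + n).choose m := by
  cases m with
  | zero => simp
  | succ k =>
    rw [show k + 1 + n = k + n + 1 by omega, mul_comm, ← add_one_mul_choose_eq]
    exact dvd_mul_right _ _

end Nat

theorem two_m_add_n_dvd_general (m n : ℕ) (hm : 0 < m) :
    2 * (m + n) ∣ m * Nat.choose (2 * m) m * Nat.choose (2 * n) n := by
  obtain ⟨c, hc⟩ := two_mul_choose_add_dvd_centralBinom_mul (m := m) (n := n) (by omega)
  calc 2 * (m + n) ∣ 2 * (m * (m + n).choose m) :=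
        mul_dvd_mul_left 2 (add_dvd_mul_choose_add m n)
    _ ∣ m * Nat.choose (2 * m) m * Nat.choose (2 * n) n := by
        refine ⟨c, ?_⟩
        rw [mul_assoc m, ← centralBinom_eq_two_mul_choose, ← centralBinom_eq_two_mul_choose, hc]
        ring

theorem two_m_add_n_dvd (m n : ℕ) (hm : 0 < m) (hn : 0 < n) :
    2 * (m + n) ∣ m * Nat.choose (2 * m) m * Nat.choose (2 * n) n :=
  two_m_add_n_dvd_general m n hm
end

section
/- For every real number x, ⌊6x⌋ + ⌊x⌋ ≥ ⌊3x⌋ + 2⌊2x⌋. -/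
/-! With `n = ⌊6x⌋` one has `⌊x⌋ = n / 6`, `⌊2x⌋ = n / 3` and `⌊3x⌋ = n / 2` (floor division),
so the claim becomes an inequality between integer quotients of `n`, checked residue by residue
modulo `6`. -/

lemma Int.ediv_two_add_two_mul_ediv_three_le (n : ℤ) : n / 2 + 2 * (n / 3) ≤ n + n / 6 := by
  omega

lemma Int.floor_ediv_natCast_of_mul_eq {x y : ℝ} {d : ℕ} (hd : d ≠ 0) (h : d * x = y) :
    ⌊y⌋ / d = ⌊x⌋ :=
  h ▸ Int.natCast_mul_floor_div_cancel hd x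

theorem floor_ineq_6x (x : ℝ) :
    ⌊3 * x⌋ + 2 * ⌊2 * x⌋ ≤ ⌊6 * x⌋ + ⌊x⌋ := by
  have h₁ : ⌊6 * x⌋ / 6 = ⌊x⌋ :=
    Int.floor_ediv_natCast_of_mul_eq (d := 6) (by norm_num) (by norm_num)
  have h₂ : ⌊6 * x⌋ / 3 = ⌊2 * x⌋ :=
    Int.floor_ediv_natCast_of_mul_eq (d := 3) (by norm_num) (by push_cast; ring)
  have h₃ : ⌊6 * x⌋ / 2 = ⌊3 * x⌋ :=
    Int.floor_ediv_natCast_of_mul_eq (d := 2) (by norm_num) (by push_cast; ring)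
  rw [← h₁, ← h₂, ← h₃]
  exact Int.ediv_two_add_two_mul_ediv_three_le _
end

section
/- For every real number x, ⌊15x⌋ + ⌊2x⌋ ≥ ⌊10x⌋ + ⌊4x⌋ + ⌊3x⌋. -/
/-!
With `n = ⌊60 x⌋`, each floor `⌊k x⌋` in the statement equals the integer quotient `n / (60 / k)`,
so the inequality becomes one between integer quotients of `n`; it depends only on `n` modulo
`60`, leaving finitely many cases.
-/

theorem Int.floor_eq_floor_natCast_mul_div {K : Type*} [Field K] [LinearOrder K]
    [IsStrictOrderedRing K] [FloorRing K] (a : K) {d : ℕ} (hd : d ≠ 0) :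
    ⌊a⌋ = ⌊(d : K) * a⌋ / d := by
  rw [← Int.floor_div_natCast, mul_div_cancel_left₀ a (Nat.cast_ne_zero.mpr hd)]

theorem floor_ineq_15x (x : ℝ) :
    ⌊10 * x⌋ + ⌊4 * x⌋ + ⌊3 * x⌋ ≤ ⌊15 * x⌋ + ⌊2 * x⌋ := by
  have floor_mul_eq (k d : ℕ) (hd : d ≠ 0) (hkd : d * k = 60) :
      ⌊(k : ℝ) * x⌋ = ⌊60 * x⌋ / d := by
    rw [Int.floor_eq_floor_natCast_mul_div _ hd, ← mul_assoc, ← Nat.cast_mul, hkd,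
      Nat.cast_ofNat]
  have h10 := floor_mul_eq 10 6 (by norm_num) (by norm_num)
  have h4 := floor_mul_eq 4 15 (by norm_num) (by norm_num)
  have h3 := floor_mul_eq 3 20 (by norm_num) (by norm_num)
  have h15 := floor_mul_eq 15 4 (by norm_num) (by norm_num)
  have h2 := floor_mul_eq 2 30 (by norm_num) (by norm_num)
  push_cast at h10 h4 h3 h15 h2
  rw [h10, h4, h3, h15, h2]
  omega
end

section
/- Let m and n be positive integers such that m divides 2n+3 and m ≥ 5. Then ⌊6n/m⌋ + ⌊n/m⌋ = ⌊3n/m⌋ + 2⌊2n/m⌋ + 1. -/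
/-
Write `n = m q + r` with `0 ≤ r < m`. Since `2r + 3` is odd, lies below `3m` and is divisible by
`m`, it equals `m`. Each `⌊kn/m⌋` then splits as `kq + ⌊kr/(2r+3)⌋`, the `q`-parts cancel
(`6 + 1 = 3 + 2·2`), and the identity reduces to `⌊6r/(2r+3)⌋ = ⌊3r/(2r+3)⌋ + 1` for `r ≥ 1`.
-/

namespace Nat

theorem mul_div_eq_mul_div_add_mul_mod_div (k n m : ℕ) :
    k * n / m = k * (n / m) + k * (n % m) / m := by
  rcases m.eq_zero_or_pos with rfl | hm
  · simp
  conv_lhs => rw [← Nat.div_add_mod n m]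
  rw [show k * (m * (n / m) + n % m) = m * (k * (n / m)) + k * (n % m) by ring,
    Nat.mul_add_div hm]

theorem two_mul_mod_add_three_eq_of_dvd {m n : ℕ} (hm : 1 < m) (hdvd : m ∣ 2 * n + 3) :
    2 * (n % m) + 3 = m := by
  have hmod : n % m < m := Nat.mod_lt n (by omega)
  obtain ⟨c, hc⟩ : m ∣ 2 * (n % m) + 3 := by
    rw [Nat.dvd_iff_mod_eq_zero] at hdvd ⊢
    rwa [Nat.add_mod, Nat.mul_mod, Nat.mod_mod, ← Nat.mul_mod, ← Nat.add_mod]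
  have hc3 : c < 3 := by
    by_contra! h
    nlinarith
  interval_cases c <;> omega

theorem six_mul_div_two_mul_add_three {r : ℕ} (hr : 0 < r) :
    6 * r / (2 * r + 3) = 3 * r / (2 * r + 3) + 1 := by
  rcases Nat.lt_or_ge r 3 with hr3 | hr3
  · rw [Nat.div_eq_of_lt_le (k := 1) (by omega) (by omega),
      Nat.div_eq_of_lt (by omega)]
  · rw [Nat.div_eq_of_lt_le (k := 2) (by omega) (by omega),
      Nat.div_eq_of_lt_le (k := 1) (by omega) (by omega)]

end Nat

theorem floor_eq_of_dvd_two_n_add_three_general (m n : ℕ)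
    (hdvd : m ∣ 2 * n + 3) (hm5 : 5 ≤ m) :
    6 * n / m + n / m = 3 * n / m + 2 * (2 * n / m) + 1 := by
  have hm : 2 * (n % m) + 3 = m := Nat.two_mul_mod_add_three_eq_of_dvd (by omega) hdvd
  have hsix := Nat.six_mul_div_two_mul_add_three (r := n % m) (by omega)
  rw [hm] at hsix
  have htwo : 2 * (n % m) / m = 0 := Nat.div_eq_of_lt (by omega)
  rw [Nat.mul_div_eq_mul_div_add_mul_mod_div 6, Nat.mul_div_eq_mul_div_add_mul_mod_div 3,
    Nat.mul_div_eq_mul_div_add_mul_mod_div 2, hsix, htwo]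
  ring

theorem floor_eq_of_dvd_two_n_add_three (m n : ℕ) (hm : 0 < m) (hn : 0 < n)
    (hdvd : m ∣ 2 * n + 3) (hm5 : 5 ≤ m) :
    6 * n / m + n / m = 3 * n / m + 2 * (2 * n / m) + 1 :=
  floor_eq_of_dvd_two_n_add_three_general m n hdvd hm5
end

section
/- Let m and n be positive integers such that either (m divides 2n+5 and m ≥ 9), or (m divides 2n+7 and m ≥ 11), or (m divides 2n+9 and m ≥ 15). Then ⌊6n/m⌋ + ⌊n/m⌋ = ⌊3n/m⌋ + 2⌊2n/m⌋ + 1. -/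
/-!
Write `n = q m + r` with `0 ≤ r < m`. Then `⌊k n / m⌋ = k q + ⌊k r / m⌋`, so the identity only
depends on `r / m`, and it holds as soon as `1/6 ≤ r / m < 1/2`. If `m ∣ 2 n + c` with `c` odd and
`c < m`, then `2 r + c` is a positive multiple of `m` below `3 m`, and it cannot be `2 m` since it is
odd; hence `2 r = m - c`, and `3 c < 2 m` gives `6 r = 3 m - 3 c ≥ m`.
-/

namespace Nat

theorem six_mul_div_add_div_eq_of_mod (m n : ℕ) (hlo : m ≤ 6 * (n % m)) (hhi : 2 * (n % m) < m) :
    6 * n / m + n / m = 3 * n / m + 2 * (2 * n / m) + 1 := by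
  set r := n % m
  have h6 : 6 * r / m = 3 * r / m + 1 := by
    rcases Nat.lt_or_ge (3 * r) m with h3 | h3
    · rw [Nat.div_eq_of_lt h3, Nat.div_eq_of_lt_le (k := 1) (m := 6 * r) (by omega) (by omega)]
    · rw [Nat.div_eq_of_lt_le (k := 1) (m := 3 * r) (by omega) (by omega),
        Nat.div_eq_of_lt_le (k := 2) (m := 6 * r) (by omega) (by omega)]
  have h2 : 2 * r / m = 0 := Nat.div_eq_of_lt hhi
  rw [mul_div_eq_mul_div_add_mul_mod_div 6 n m, mul_div_eq_mul_div_add_mul_mod_div 3 n m,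
    mul_div_eq_mul_div_add_mul_mod_div 2 n m, h6, h2]
  ring

theorem two_mul_mod_add_eq_of_dvd {m n c : ℕ} (hc : Odd c) (hcm : c < m) (hdvd : m ∣ 2 * n + c) :
    2 * (n % m) + c = m := by
  have hdvd' : m ∣ 2 * (n % m) + c := by
    have : 2 * n + c = 2 * (n % m) + c + m * (2 * (n / m)) := by
      conv_lhs => rw [← Nat.div_add_mod n m]
      ring
    rwa [this, Nat.dvd_add_left (Nat.dvd_mul_right _ _)] at hdvd
  obtain ⟨t, ht⟩ := hdvd'
  have hr : n % m < m := Nat.mod_lt _ (by omega)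
  have ht3 : t < 3 := by
    by_contra! h3
    nlinarith
  obtain ⟨c', rfl⟩ := hc
  interval_cases t <;> omega

end Nat

theorem floor_eq_lemma4_general (m n : ℕ)
    (h : (m ∣ 2 * n + 5 ∧ 9 ≤ m) ∨ (m ∣ 2 * n + 7 ∧ 11 ≤ m) ∨ (m ∣ 2 * n + 9 ∧ 15 ≤ m)) :
    6 * n / m + n / m = 3 * n / m + 2 * (2 * n / m) + 1 := by
  obtain ⟨c, hc, hcm, hdvd⟩ : ∃ c, Odd c ∧ 3 * c < 2 * m ∧ m ∣ 2 * n + c := by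
    rcases h with ⟨hd, hge⟩ | ⟨hd, hge⟩ | ⟨hd, hge⟩
    · exact ⟨5, by decide, by omega, hd⟩
    · exact ⟨7, by decide, by omega, hd⟩
    · exact ⟨9, by decide, by omega, hd⟩
  have hr := Nat.two_mul_mod_add_eq_of_dvd hc (by omega) hdvd
  exact Nat.six_mul_div_add_div_eq_of_mod m n (by omega) (by have := hc.pos; omega)

theorem floor_eq_lemma4 (m n : ℕ) (hm : 0 < m) (hn : 0 < n)
    (h : (m ∣ 2 * n + 5 ∧ 9 ≤ m) ∨ (m ∣ 2 * n + 7 ∧ 11 ≤ m) ∨ (m ∣ 2 * n + 9 ∧ 15 ≤ m)) :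
    6 * n / m + n / m = 3 * n / m + 2 * (2 * n / m) + 1 :=
  floor_eq_lemma4_general m n h
end

section
/- Let n be a positive integer. Then, in ℤ[q]: (i) (1 − q^{10n+1}) · [10n]! · [4n]! · [3n]! divides (1 − q) · [15n]! · [2n]!; and (ii) (1 − q)(1 − q^{10n+3}) · [10n]! · [4n]! · [3n]! divides (1 − q³)(1 − q⁷) · [15n]! · [2n]!. -/
/-!
Over `ℤ`, `1 - q^k = -∏_{d ∣ k} Φ_d`, so `[k]!` is, up to sign, `∏_d Φ_d ^ ⌊k/d⌋`, and divisibility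
between such products of cyclotomic polynomials is checked exponent by exponent. For `Φ_d` the
claim becomes the Chebyshev–Landau floor inequality
`⌊10x⌋ + ⌊4x⌋ + ⌊3x⌋ ≤ ⌊15x⌋ + ⌊2x⌋` at `x = n/d`, together with its strictness when `d` divides
`10n + 1` (resp. `10n + 3`): then `m = ⌊60n/d⌋` is `≡ 4, 5 (mod 12)`, and both floor sums only
depend on `m`.
-/

open Polynomial

/-- The polynomial `[k]! = ∏_{i=1}^{k} (1 - q^i)` in `ℤ[q]`. -/
noncomputable def qFac (k : ℕ) : Polynomial ℤ :=
  ∏ i ∈ Finset.range k, (1 - Polynomial.X ^ (i + 1))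

open Finset

noncomputable def cyclotomicProd (N : ℕ) (e : ℕ → ℕ) : ℤ[X] :=
  ∏ d ∈ Ioc 0 N, cyclotomic d ℤ ^ e d

lemma cyclotomicProd_add (N : ℕ) (e f : ℕ → ℕ) :
    cyclotomicProd N (e + f) = cyclotomicProd N e * cyclotomicProd N f := by
  simp only [cyclotomicProd, Pi.add_apply, pow_add, prod_mul_distrib]

lemma cyclotomicProd_dvd_cyclotomicProd {N : ℕ} {e f : ℕ → ℕ} (h : ∀ d ∈ Ioc 0 N, e d ≤ f d) :
    cyclotomicProd N e ∣ cyclotomicProd N f :=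
  prod_dvd_prod_of_dvd _ _ fun d hd => pow_dvd_pow _ (h d hd)

lemma cyclotomicProd_ite_dvd_eq_X_pow_sub_one {k N : ℕ} (hk : 0 < k) (hkN : k ≤ N) :
    cyclotomicProd N (fun d => if d ∣ k then 1 else 0) = X ^ k - 1 := by
  have hdivisors : (Ioc 0 N).filter (· ∣ k) = k.divisors := by
    ext d
    simp only [mem_filter, mem_Ioc, Nat.mem_divisors]
    constructor
    · rintro ⟨-, hdk⟩
      exact ⟨hdk, hk.ne'⟩
    · rintro ⟨hdk, -⟩
      exact ⟨⟨Nat.pos_of_dvd_of_pos hdk hk, (Nat.le_of_dvd hk hdk).trans hkN⟩, hdk⟩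
  simp only [cyclotomicProd, pow_ite, pow_one, pow_zero]
  rw [← prod_filter, hdivisors, prod_cyclotomic_eq_X_pow_sub_one hk]

lemma associated_one_sub_X_pow {k N : ℕ} (hk : 0 < k) (hkN : k ≤ N) :
    Associated (1 - X ^ k) (cyclotomicProd N fun d => if d ∣ k then 1 else 0) := by
  rw [cyclotomicProd_ite_dvd_eq_X_pow_sub_one hk hkN, ← neg_sub]
  exact (Associated.refl _).neg_left

lemma associated_qFac {k N : ℕ} (hkN : k ≤ N) :
    Associated (qFac k) (cyclotomicProd N fun d => k / d) := by
  induction k with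
  | zero => simp [qFac, cyclotomicProd]
  | succ k ih =>
    have hexp :
        (fun d => (k + 1) / d) = (fun d => k / d) + fun d => if d ∣ k + 1 then 1 else 0 := by
      funext d
      exact Nat.succ_div
    rw [qFac, prod_range_succ, ← qFac, hexp, cyclotomicProd_add]
    exact (ih (by omega)).mul_mul (associated_one_sub_X_pow k.succ_pos hkN)

lemma mul_div_eq_div_div {k c M : ℕ} (hkc : k * c = M) (hc : 0 < c) (x d : ℕ) :
    k * x / d = M * x / d / c := by
  rw [Nat.div_div_eq_div_mul, ← hkc, mul_right_comm, Nat.mul_div_mul_right _ _ hc]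

lemma floor_sums_eq_div_div (x d : ℕ) :
    10 * x / d + 4 * x / d + 3 * x / d = 60 * x / d / 6 + 60 * x / d / 15 + 60 * x / d / 20 ∧
      15 * x / d + 2 * x / d = 60 * x / d / 4 + 60 * x / d / 30 := by
  rw [mul_div_eq_div_div (show 10 * 6 = 60 by rfl) (by norm_num),
    mul_div_eq_div_div (show 4 * 15 = 60 by rfl) (by norm_num),
    mul_div_eq_div_div (show 3 * 20 = 60 by rfl) (by norm_num),
    mul_div_eq_div_div (show 15 * 4 = 60 by rfl) (by norm_num),
    mul_div_eq_div_div (show 2 * 30 = 60 by rfl) (by norm_num)]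
  exact ⟨rfl, rfl⟩

lemma floor_sum_le (x d : ℕ) : 10 * x / d + 4 * x / d + 3 * x / d ≤ 15 * x / d + 2 * x / d := by
  rw [(floor_sums_eq_div_div x d).1, (floor_sums_eq_div_div x d).2]
  omega

lemma floor_sum_lt_of_mod_twelve {x d : ℕ} (h : 60 * x / d % 12 = 4 ∨ 60 * x / d % 12 = 5) :
    10 * x / d + 4 * x / d + 3 * x / d < 15 * x / d + 2 * x / d := by
  rw [(floor_sums_eq_div_div x d).1, (floor_sums_eq_div_div x d).2]
  generalize 60 * x / d = m at h ⊢
  obtain ⟨q, s, hs, rfl⟩ : ∃ q s, s < 60 ∧ m = 60 * q + s :=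
    ⟨m / 60, m % 60, Nat.mod_lt _ (by norm_num), (Nat.div_add_mod m 60).symm⟩
  interval_cases s <;> omega

/-- Writing `10x + r = dA`, we get `6dA - 6r = 60x`, so `⌊60x/d⌋ ∈ {6A - 2, 6A - 1}` when
`0 < 6r ≤ 2d`, and `6A ≡ 6 (mod 12)` as `A` is odd. -/
lemma sixty_mul_div_mod_twelve_of_dvd {x d r : ℕ} (hr : Odd r) (hrd : 3 * r ≤ d)
    (hdvd : d ∣ 10 * x + r) : 60 * x / d % 12 = 4 ∨ 60 * x / d % 12 = 5 := by
  obtain ⟨A, hA⟩ := hdvd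
  have hA_odd : Odd A := by
    have h10 : Odd (10 * x + r) := by
      obtain ⟨k, rfl⟩ := hr
      exact ⟨5 * x + k, by ring⟩
    exact (Nat.odd_mul.mp (hA ▸ h10)).2
  have hr_pos : 0 < r := hr.pos
  have hd : 0 < d := by omega
  set m := 60 * x / d
  have hlow : m * d ≤ 60 * x := Nat.div_mul_le_self _ _
  have hhigh : 60 * x < m * d + d := Nat.lt_div_mul_add hd
  have hm_lt : m < 6 * A := Nat.lt_of_mul_lt_mul_right (a := d) (by linarith)
  have hm_ge : 6 * A < m + 3 := Nat.lt_of_mul_lt_mul_right (a := d) (by linarith)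
  obtain ⟨B, rfl⟩ := hA_odd
  omega

lemma floor_sum_lt_of_dvd {x d r : ℕ} (hr : Odd r) (hrd : 3 * r ≤ d) (hdvd : d ∣ 10 * x + r) :
    10 * x / d + 4 * x / d + 3 * x / d < 15 * x / d + 2 * x / d :=
  floor_sum_lt_of_mod_twelve (sixty_mul_div_mod_twelve_of_dvd hr hrd hdvd)

lemma cyclotomic_exponent_le_of_ten_mul_add_one (n d : ℕ) :
    (if d ∣ 10 * n + 1 then 1 else 0) + (10 * n / d + 4 * n / d + 3 * n / d) ≤
      (if d ∣ 1 then 1 else 0) + (15 * n / d + 2 * n / d) := by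
  have hle := floor_sum_le n d
  rcases eq_or_ne d 1 with rfl | hd1
  · simp only [one_dvd, if_true]
    omega
  rw [if_neg (Nat.dvd_one.not.mpr hd1)]
  split_ifs with hdvd
  · have hodd : Odd d := Odd.of_dvd_nat ⟨5 * n, by ring⟩ hdvd
    have hd3 : 3 * 1 ≤ d := by
      obtain ⟨k, rfl⟩ := hodd
      omega
    have hlt := floor_sum_lt_of_dvd odd_one hd3 hdvd
    omega
  · omega

lemma cyclotomic_exponent_le_of_ten_mul_add_three (n d : ℕ) :
    (if d ∣ 1 then 1 else 0) + (if d ∣ 10 * n + 3 then 1 else 0) +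
        (10 * n / d + 4 * n / d + 3 * n / d) ≤
      (if d ∣ 3 then 1 else 0) + (if d ∣ 7 then 1 else 0) + (15 * n / d + 2 * n / d) := by
  have hle := floor_sum_le n d
  rcases eq_or_ne d 1 with rfl | hd1
  · simp only [one_dvd, if_true]
    omega
  rw [if_neg (Nat.dvd_one.not.mpr hd1)]
  by_cases hdvd : d ∣ 10 * n + 3
  · rw [if_pos hdvd]
    by_cases h37 : d = 3 ∨ d = 7
    · rcases h37 with rfl | rfl <;> norm_num <;> omega
    · have hodd : Odd d := Odd.of_dvd_nat ⟨5 * n + 1, by ring⟩ hdvd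
      have hd5 : d ≠ 5 := by
        rintro rfl
        omega
      have hd9 : 3 * 3 ≤ d := by
        obtain ⟨k, rfl⟩ := hodd
        omega
      have hlt := floor_sum_lt_of_dvd (by decide) hd9 hdvd
      omega
  · rw [if_neg hdvd]
    omega

theorem q_divisibility_15n (n : ℕ) (hn : 0 < n) :
    ((1 - Polynomial.X ^ (10 * n + 1)) * (qFac (10 * n) * qFac (4 * n) * qFac (3 * n)) ∣
        (1 - Polynomial.X) * (qFac (15 * n) * qFac (2 * n))) ∧
    ((1 - Polynomial.X) * (1 - Polynomial.X ^ (10 * n + 3)) *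
          (qFac (10 * n) * qFac (4 * n) * qFac (3 * n)) ∣
        (1 - Polynomial.X ^ 3) * (1 - Polynomial.X ^ 7) *
          (qFac (15 * n) * qFac (2 * n))) := by
  have hqFac {k : ℕ} (hk : k ≤ 15 * n) := associated_qFac hk
  have hX {k : ℕ} (hk : 0 < k) (hkn : k ≤ 15 * n) := associated_one_sub_X_pow hk hkn
  have hX1 := hX one_pos (by omega)
  rw [pow_one] at hX1
  have hden := ((hqFac (k := 10 * n) (by omega)).mul_mul (hqFac (k := 4 * n) (by omega))).mul_mul
    (hqFac (k := 3 * n) (by omega))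
  have hnum := (hqFac (k := 15 * n) le_rfl).mul_mul (hqFac (k := 2 * n) (by omega))
  simp only [← cyclotomicProd_add] at hden hnum
  constructor
  · have hL := (hX (k := 10 * n + 1) (by omega) (by omega)).mul_mul hden
    have hR := hX1.mul_mul hnum
    simp only [← cyclotomicProd_add] at hL hR
    exact hL.dvd_iff_dvd_left.2 <| hR.dvd_iff_dvd_right.2 <|
      cyclotomicProd_dvd_cyclotomicProd fun d _ => cyclotomic_exponent_le_of_ten_mul_add_one n d
  · have hL := (hX1.mul_mul (hX (k := 10 * n + 3) (by omega) (by omega))).mul_mul hden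
    have hR := ((hX (k := 3) (by omega) (by omega)).mul_mul
      (hX (k := 7) (by omega) (by omega))).mul_mul hnum
    simp only [← cyclotomicProd_add] at hL hR
    exact hL.dvd_iff_dvd_left.2 <| hR.dvd_iff_dvd_right.2 <|
      cyclotomicProd_dvd_cyclotomicProd fun d _ => cyclotomic_exponent_le_of_ten_mul_add_three n d
end
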